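/- arXiv:2105.01345 — 10 statements merged into one kernel-verified Lean document; each statement's English description precedes it below -/
import Mathlib

section
/- Let G be a group with subset S ⊆ G, S ∩ S⁻¹ = ∅, satisfying the closure condition: for all a,b,c ∈ S, if abc ∈ S then ab ∈ S and bc ∈ S. Define on S ∪ {e} the relation a ≤_L b iff there exists c ∈ S ∪ {e} with ac = b. Then ≤_L is a partial order on S ∪ {e}. -/
/-- If `S ⊆ G` satisfies `S ∩ S⁻¹ = ∅` and the closure condition
(`a,b,c ∈ S` and `abc ∈ S` imply `ab ∈ S` and `bc ∈ S`), then the relation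
`a ≤_L b ↔ ∃ c ∈ S ∪ {e}, ac = b` is a partial order on `S ∪ {e}`
(reflexive, antisymmetric and transitive). -/
theorem left_divisibility_partial_order {G : Type*} [Group G] (S : Set G)
    (hdisj : S ∩ S⁻¹ = ∅)
    (hclos : ∀ a ∈ S, ∀ b ∈ S, ∀ c ∈ S, a * b * c ∈ S → a * b ∈ S ∧ b * c ∈ S) :
    (∀ a ∈ S ∪ {1}, ∃ c ∈ S ∪ {1}, a * c = a) ∧
    (∀ a ∈ S ∪ {1}, ∀ b ∈ S ∪ {1},
      (∃ c ∈ S ∪ {1}, a * c = b) → (∃ c ∈ S ∪ {1}, b * c = a) → a = b) ∧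
    (∀ a ∈ S ∪ {1}, ∀ b ∈ S ∪ {1}, ∀ c ∈ S ∪ {1},
      (∃ d ∈ S ∪ {1}, a * d = b) → (∃ d ∈ S ∪ {1}, b * d = c) →
        ∃ d ∈ S ∪ {1}, a * d = c) := by
  have hempty : ∀ x, x ∈ S → x⁻¹ ∈ S → False := by
    intro x hx hxi
    have : x ∈ S ∩ S⁻¹ := ⟨hx, by simpa using hxi⟩
    simp [hdisj] at this
  refine ⟨?_, ?_, ?_⟩
  · intro a _
    exact ⟨1, Or.inr rfl, mul_one a⟩
  · rintro a _ b _ ⟨c, hc, rfl⟩ ⟨d, hd, hd2⟩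
    have hcd : c * d = 1 := by
      have h : a * (c * d) = a * 1 := by rw [mul_one, ← mul_assoc]; exact hd2
      exact mul_left_cancel h
    rcases hc with hc | hc
    · rcases hd with hd | hd
      · exact absurd (hempty c hc
          (by rw [inv_eq_of_mul_eq_one_right hcd]; exact hd)) id
      · simp only [Set.mem_singleton_iff] at hd
        subst hd
        rw [mul_one] at hcd
        rw [hcd, mul_one]
    · simp only [Set.mem_singleton_iff] at hc
      subst hc
      rw [mul_one]
  · rintro a ha b hb c hc ⟨d, hd, rfl⟩ ⟨e, he, rfl⟩
    rcases ha with ha | ha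
    · rcases hd with hd | hd
      · rcases he with he | he
        · rcases hc with hc | hc
          · have := (hclos a ha d hd e he (by simpa [mul_assoc] using hc)).2
            exact ⟨d * e, Or.inl this, by group⟩
          · exfalso
            simp only [Set.mem_singleton_iff] at hc
            rcases hb with hb | hb
            · exact hempty (a * d) hb
                (by rw [inv_eq_of_mul_eq_one_right hc]; exact he)
            · simp only [Set.mem_singleton_iff] at hb
              exact hempty a ha
                (by rw [inv_eq_of_mul_eq_one_right hb]; exact hd)
        · simp only [Set.mem_singleton_iff] at he; subst he
          exact ⟨d, Or.inl hd, by simp⟩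
      · simp only [Set.mem_singleton_iff] at hd; subst hd
        exact ⟨e, he, by simp⟩
    · simp only [Set.mem_singleton_iff] at ha; subst ha
      exact ⟨d * e, by simpa [mul_assoc] using hc, by group⟩
end

section
/- Let G be a group with subset S ⊆ G, S ∩ S⁻¹ = ∅, satisfying: for all a,b,c ∈ S, if abc ∈ S then ab ∈ S and bc ∈ S. Define a ≤_R b iff there exists c ∈ S ∪ {e} with ca = b. Then ≤_R is a partial order on S ∪ {e}. -/
/-- If `S ⊆ G` satisfies `S ∩ S⁻¹ = ∅` and the closure condition
(`a,b,c ∈ S` and `abc ∈ S` imply `ab ∈ S` and `bc ∈ S`), then the relation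
`a ≤_R b ↔ ∃ c ∈ S ∪ {e}, ca = b` is a partial order on `S ∪ {e}`
(reflexive, antisymmetric and transitive). -/
theorem right_divisibility_partial_order {G : Type*} [Group G] (S : Set G)
    (hdisj : S ∩ S⁻¹ = ∅)
    (hclos : ∀ a ∈ S, ∀ b ∈ S, ∀ c ∈ S, a * b * c ∈ S → a * b ∈ S ∧ b * c ∈ S) :
    (∀ a ∈ S ∪ {1}, ∃ c ∈ S ∪ {1}, c * a = a) ∧
    (∀ a ∈ S ∪ {1}, ∀ b ∈ S ∪ {1},
      (∃ c ∈ S ∪ {1}, c * a = b) → (∃ c ∈ S ∪ {1}, c * b = a) → a = b) ∧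
    (∀ a ∈ S ∪ {1}, ∀ b ∈ S ∪ {1}, ∀ c ∈ S ∪ {1},
      (∃ d ∈ S ∪ {1}, d * a = b) → (∃ d ∈ S ∪ {1}, d * b = c) →
        ∃ d ∈ S ∪ {1}, d * a = c) := by
  have hkey : ∀ x : G, x ∈ S → x⁻¹ ∈ S → False := by
    intro x hx hxi
    have : x ∈ S ∩ S⁻¹ := ⟨hx, by simpa using hxi⟩
    simp [hdisj] at this
  refine ⟨fun a _ => ⟨1, Or.inr rfl, one_mul a⟩, ?_, ?_⟩
  · rintro a _ b _ ⟨c, hc, hca⟩ ⟨d, hd, hdb⟩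
    have hdc : d * c = 1 := by
      have h : d * c * a = a := by rw [mul_assoc, hca, hdb]
      calc d * c = d * c * a * a⁻¹ := by group
        _ = 1 := by rw [h]; group
    rcases hc with hc | hc
    · rcases hd with hd | hd
      · exfalso
        have : d = c⁻¹ := eq_inv_of_mul_eq_one_left hdc
        exact hkey c hc (this ▸ hd)
      · simp only [Set.mem_singleton_iff] at hd
        subst hd
        rw [one_mul] at hdc
        subst hdc
        rw [one_mul] at hca
        exact hca.symm ▸ rfl
    · simp only [Set.mem_singleton_iff] at hc
      subst hc
      rw [one_mul] at hca
      exact hca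
  · rintro a ha b hb c hc ⟨d, hd, hda⟩ ⟨e, he, heb⟩
    refine ⟨e * d, ?_, by rw [mul_assoc, hda, heb]⟩
    rcases hd with hd | hd
    · rcases he with he | he
      · rcases ha with ha | ha
        · rcases hc with hcS | hc1
          · have hprod : e * d * a ∈ S := by rw [mul_assoc, hda, heb]; exact hcS
            exact Or.inl (hclos e he d hd a ha hprod).1
          · simp only [Set.mem_singleton_iff] at hc1
            subst hc1
            exfalso
            rcases hb with hbS | hb1
            · have : e = b⁻¹ := eq_inv_of_mul_eq_one_left heb
              exact hkey b hbS (this ▸ he)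
            · simp only [Set.mem_singleton_iff] at hb1
              subst hb1
              have : d = a⁻¹ := eq_inv_of_mul_eq_one_left hda
              exact hkey a ha (this ▸ hd)
        · simp only [Set.mem_singleton_iff] at ha
          subst ha
          rw [mul_one] at hda
          subst hda
          rw [heb]
          exact hc
      · simp only [Set.mem_singleton_iff] at he
        subst he
        rw [one_mul]
        exact Or.inl hd
    · simp only [Set.mem_singleton_iff] at hd
      subst hd
      rw [mul_one]
      exact he
end

section
/- Let G be a group generated by a finite set S with S ∩ S⁻¹ = ∅, and suppose G admits the presentation ⟨S ∣ R⟩ where R = {a·b·c⁻¹ : a,b,c ∈ S with abc⁻¹ = e in G}. Suppose moreover that for all a,b,c ∈ S, abc ∉ S ∪ {e}. Then in any finite subset V of G that is pairwise adjacent in the Cayley graph (i.e., for distinct v,w ∈ V, v⁻¹w ∈ S ∪ S⁻¹) with |V| ≥ 1, there exists a unique vertex v₀ ∈ V such that for every w ∈ V \ {v₀} there is k ∈ S with v₀ = wk. -/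
private lemma exists_sink {α : Type*} [DecidableEq α] (r : α → α → Prop) :
    ∀ (T : Finset α), T.Nonempty →
    (∀ a ∈ T, ∀ b ∈ T, ∀ c ∈ T, r a b → r b c → r a c) →
    (∀ a ∈ T, ¬ r a a) →
    ∃ a ∈ T, ∀ b ∈ T, ¬ r a b := by
  intro T
  induction T using Finset.induction_on with
  | empty => intro h; simp at h
  | @insert x T' hx ih =>
    intro _ htrans hirr
    rcases T'.eq_empty_or_nonempty with he | hne
    · subst he
      refine ⟨x, Finset.mem_insert_self _ _, ?_⟩
      intro b hb
      rw [Finset.mem_insert] at hb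
      rcases hb with rfl | hb
      · exact hirr _ (Finset.mem_insert_self _ _)
      · simp at hb
    · obtain ⟨a, ha, hmax⟩ := ih hne
        (fun p hp q hq s hs => htrans p (Finset.mem_insert_of_mem hp) q
          (Finset.mem_insert_of_mem hq) s (Finset.mem_insert_of_mem hs))
        (fun p hp => hirr p (Finset.mem_insert_of_mem hp))
      by_cases hax : r a x
      · refine ⟨x, Finset.mem_insert_self _ _, ?_⟩
        intro b hb hxb
        rw [Finset.mem_insert] at hb
        rcases hb with rfl | hb
        · exact hirr b (Finset.mem_insert_self _ _) hxb
        · exact hmax b hb (htrans a (Finset.mem_insert_of_mem ha) x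
            (Finset.mem_insert_self _ _) b (Finset.mem_insert_of_mem hb) hax hxb)
      · refine ⟨a, Finset.mem_insert_of_mem ha, ?_⟩
        intro b hb hab
        rw [Finset.mem_insert] at hb
        rcases hb with rfl | hb
        · exact hax hab
        · exact hmax b hb hab

/-- Let `G` be generated by a finite `S` with `S ∩ S⁻¹ = ∅`,
admitting the presentation `⟨S ∣ R⟩` with `R = {abc⁻¹ : a,b,c ∈ S, abc⁻¹ = e in G}`,
and suppose `abc ∉ S ∪ {e}` for all `a,b,c ∈ S`.  Then every nonempty finite
pairwise-adjacent subset `V` of the Cayley graph has a unique vertex `v₀` such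
that every other vertex of `V` reaches `v₀` by right multiplication by a generator. -/
theorem clique_has_unique_sink {G : Type*} [Group G] (S : Finset G)
    (hgen : Subgroup.closure (S : Set G) = ⊤)
    (hdisj : (S : Set G) ∩ (S : Set G)⁻¹ = ∅)
    (hno : ∀ a ∈ S, ∀ b ∈ S, ∀ c ∈ S, a * b * c ∉ (S : Set G) ∧ a * b * c ≠ 1)
    (rels : Set (FreeGroup {x : G // x ∈ S}))
    (hrels : rels = {r | ∃ a b c : {x : G // x ∈ S},
      (a : G) * (b : G) * ((c : G))⁻¹ = 1 ∧
      r = FreeGroup.of a * FreeGroup.of b * (FreeGroup.of c)⁻¹})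
    (hlift : ∀ r ∈ rels, FreeGroup.lift (fun s : {x : G // x ∈ S} => (s : G)) r = 1)
    (hpres : Function.Bijective (PresentedGroup.toGroup hlift)) :
    ∀ V : Finset G, V.Nonempty →
      (∀ v ∈ V, ∀ w ∈ V, v ≠ w → v⁻¹ * w ∈ (S : Set G) ∪ (S : Set G)⁻¹) →
      ∃! v₀ : G, v₀ ∈ V ∧ ∀ w ∈ V, w ≠ v₀ → ∃ k ∈ S, v₀ = w * k := by
  classical
  intro V hVne hadj
  have hone : (1 : G) ∉ S := by
    intro h1
    have : (1 : G) ∈ (S : Set G) ∩ (S : Set G)⁻¹ := ⟨h1, by simpa using h1⟩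
    rw [hdisj] at this; exact this
  set r : G → G → Prop := fun v w => v⁻¹ * w ∈ S with hr
  have htrans : ∀ a ∈ V, ∀ b ∈ V, ∀ c ∈ V, r a b → r b c → r a c := by
    intro a ha b hb c hc hab hbc
    have hne : a ≠ c := by
      rintro rfl
      have : (a⁻¹ * b) ∈ (S : Set G) ∩ (S : Set G)⁻¹ := by
        refine ⟨hab, ?_⟩
        rw [Set.mem_inv]
        simpa [mul_inv_rev] using hbc
      rw [hdisj] at this; exact this
    rcases hadj a ha c hc hne with h | h
    · simp only [hr]
      have : a⁻¹ * c = (a⁻¹ * b) * (b⁻¹ * c) := by group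
      rw [this] at h ⊢
      exact h
    · exfalso
      have hc' : c⁻¹ * a ∈ S := by
        rw [Set.mem_inv] at h
        simpa [mul_inv_rev] using h
      exact (hno _ hab _ hbc _ hc').2 (by group)
  have hirr : ∀ a ∈ V, ¬ r a a := by
    intro a _ h
    simp only [hr, inv_mul_cancel] at h
    exact hone h
  obtain ⟨v₀, hv₀, hmax⟩ := exists_sink r V hVne htrans hirr
  have hsink : ∀ w ∈ V, w ≠ v₀ → ∃ k ∈ S, v₀ = w * k := by
    intro w hw hwne
    rcases hadj w hw v₀ hv₀ hwne with h | h
    · exact ⟨w⁻¹ * v₀, h, by group⟩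
    · exfalso
      apply hmax w hw
      simp only [hr]
      rw [Set.mem_inv] at h
      simpa [mul_inv_rev] using h
  refine ⟨v₀, ⟨hv₀, hsink⟩, ?_⟩
  rintro v₁ ⟨hv₁, hsink₁⟩
  by_contra hne
  obtain ⟨k, hk, hk'⟩ := hsink₁ v₀ hv₀ (Ne.symm hne)
  obtain ⟨k', hk2, hk2'⟩ := hsink v₁ hv₁ hne
  have : k ∈ (S : Set G) ∩ (S : Set G)⁻¹ := by
    refine ⟨hk, ?_⟩
    rw [Set.mem_inv]
    have h2 : v₀ * (k * k') = v₀ * 1 := by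
      rw [mul_one, ← mul_assoc, ← hk', ← hk2']
    have hkk : k * k' = 1 := mul_left_cancel h2
    have hkinv : k' = k⁻¹ := eq_inv_of_mul_eq_one_right hkk
    rw [← hkinv]; exact hk2
  rw [hdisj] at this; exact this
end

section
/- Let P be a lattice-ordered monoid structure arising from a Garside structure (G, P, Δ): for a,b ∈ G define a ≤_L b iff a⁻¹b ∈ P. Suppose that for all simple elements s,t ∈ S = [e,Δ] we have s ∧_L t ∈ {e, s, t}. Then for every atom a of P there exists at most one atom b with ab ∈ S. (Uniqueness of right complement atoms under the left-gcd trichotomy condition.) -/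
/-- A Garside structure `(G, P, Δ)` on a group `G`: a positive monoid `P` with
`P ∩ P⁻¹ = {e}`, whose prefix order `a ≤_L b ↔ a⁻¹b ∈ P` and suffix order
`a ≤_R b ↔ ba⁻¹ ∈ P` are lattice orders (with gcds `meetL`, `meetR` and
lcms `joinL`, `joinR`), a balanced Garside element `Δ` whose interval of simple
elements generates `P`, with `Δ⁻¹PΔ = P` and the atomicity (finite norm) condition. -/
structure GarsideStruct (G : Type*) [Group G] where
  P : Submonoid G
  Δ : G
  Δ_mem : Δ ∈ P
  inf_trivial : ∀ a : G, a ∈ P → a⁻¹ ∈ P → a = 1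
  meetL : G → G → G
  meetL_le_left : ∀ a b, (meetL a b)⁻¹ * a ∈ P
  meetL_le_right : ∀ a b, (meetL a b)⁻¹ * b ∈ P
  meetL_greatest : ∀ a b c, c⁻¹ * a ∈ P → c⁻¹ * b ∈ P → c⁻¹ * meetL a b ∈ P
  joinL : G → G → G
  joinL_le_left : ∀ a b, a⁻¹ * joinL a b ∈ P
  joinL_le_right : ∀ a b, b⁻¹ * joinL a b ∈ P
  joinL_least : ∀ a b c, a⁻¹ * c ∈ P → b⁻¹ * c ∈ P → (joinL a b)⁻¹ * c ∈ P
  meetR : G → G → G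
  meetR_le_left : ∀ a b, a * (meetR a b)⁻¹ ∈ P
  meetR_le_right : ∀ a b, b * (meetR a b)⁻¹ ∈ P
  meetR_greatest : ∀ a b c, a * c⁻¹ ∈ P → b * c⁻¹ ∈ P → meetR a b * c⁻¹ ∈ P
  joinR : G → G → G
  joinR_le_left : ∀ a b, joinR a b * a⁻¹ ∈ P
  joinR_le_right : ∀ a b, joinR a b * b⁻¹ ∈ P
  joinR_least : ∀ a b c, c * a⁻¹ ∈ P → c * b⁻¹ ∈ P → c * (joinR a b)⁻¹ ∈ P
  balanced : ∀ a : G, (a ∈ P ∧ a⁻¹ * Δ ∈ P) ↔ (a ∈ P ∧ Δ * a⁻¹ ∈ P)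
  conj_Δ : ∀ a ∈ P, Δ⁻¹ * a * Δ ∈ P
  simples_generate : P ≤ Submonoid.closure {a : G | a ∈ P ∧ a⁻¹ * Δ ∈ P}
  atomic : ∀ x ∈ P, x ≠ 1 → ∃ N : ℕ,
    ∀ l : List G, (∀ a ∈ l, a ∈ P ∧ a ≠ 1) → l.prod = x → l.length ≤ N

namespace GarsideStruct

variable {G : Type*} [Group G] (g : GarsideStruct G)

/-- The prefix order `a ≤_L b ↔ a⁻¹b ∈ P`. -/
def leL (a b : G) : Prop := a⁻¹ * b ∈ g.P

/-- The suffix order `a ≤_R b ↔ ba⁻¹ ∈ P`. -/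
def leR (a b : G) : Prop := b * a⁻¹ ∈ g.P

/-- The set `S = [e, Δ]` of simple elements. -/
def simples : Set G := {a : G | a ∈ g.P ∧ a⁻¹ * g.Δ ∈ g.P}

/-- An atom of `P`: a nontrivial positive element with no factorization into
two nontrivial positive elements (i.e. of norm `1`). -/
def IsAtomP (a : G) : Prop :=
  a ∈ g.P ∧ a ≠ 1 ∧ ∀ x y : G, x ∈ g.P → y ∈ g.P → x ≠ 1 → y ≠ 1 → x * y ≠ a

end GarsideStruct

/-- In a Garside structure in which `s ∧_L t ∈ {e, s, t}` for all
simple elements `s, t`, every atom `a` has at most one atom `b` with `ab` simple. -/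
theorem unique_right_complement_atom {G : Type*} [Group G] (g : GarsideStruct G)
    (hmeet : ∀ s ∈ g.simples, ∀ t ∈ g.simples, g.meetL s t ∈ ({1, s, t} : Set G)) :
    ∀ a b₁ b₂ : G, g.IsAtomP a → g.IsAtomP b₁ → g.IsAtomP b₂ →
      a * b₁ ∈ g.simples → a * b₂ ∈ g.simples → b₁ = b₂ := by
  intro a b₁ b₂ ha hb₁ hb₂ hs₁ hs₂
  obtain ⟨haP, haNe, -⟩ := ha
  obtain ⟨hb₁P, hb₁Ne, hb₁At⟩ := hb₁
  obtain ⟨hb₂P, hb₂Ne, hb₂At⟩ := hb₂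
  -- a ≤_L meetL (a*b₁) (a*b₂)
  have ham : a⁻¹ * g.meetL (a * b₁) (a * b₂) ∈ g.P := by
    apply g.meetL_greatest
    · simpa [mul_assoc] using hb₁P
    · simpa [mul_assoc] using hb₂P
  have hcases := hmeet _ hs₁ _ hs₂
  rcases hcases with h | h | h
  · exfalso
    rw [h, mul_one] at ham
    exact haNe (g.inf_trivial a haP ham)
  · -- meet = a*b₁, so b₁⁻¹*b₂ ∈ P
    have := g.meetL_le_right (a * b₁) (a * b₂)
    rw [h] at this
    have hc : b₁⁻¹ * b₂ ∈ g.P := by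
      simpa [mul_assoc, mul_inv_rev] using this
    by_contra hne
    have hcne : b₁⁻¹ * b₂ ≠ 1 := by
      intro hh
      apply hne
      have := mul_eq_one_iff_eq_inv.mp hh
      simp at this
      exact this
    exact hb₂At b₁ (b₁⁻¹ * b₂) hb₁P hc hb₁Ne hcne (by group)
  · -- meet = a*b₂, so b₂⁻¹*b₁ ∈ P
    have := g.meetL_le_left (a * b₁) (a * b₂)
    rw [h] at this
    have hc : b₂⁻¹ * b₁ ∈ g.P := by
      simpa [mul_assoc, mul_inv_rev] using this
    by_contra hne
    have hcne : b₂⁻¹ * b₁ ≠ 1 := by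
      intro hh
      apply hne
      have := mul_eq_one_iff_eq_inv.mp hh
      simp at this
      exact this.symm
    exact hb₁At b₂ (b₂⁻¹ * b₁) hb₂P hc hb₂Ne hcne (by group)
end

section
/- In the Garside group G_{n,m} = ⟨x₁,…,xₙ ∣ Π(x₁,…,xₙ;m) = Π(x₂,…,xₙ,x₁;m) = … = Π(xₙ,x₁,…,x_{n−1};m)⟩ with simple elements S = {Π(x_i,…,x_{i+n}; k) : 1 ≤ i ≤ n, 0 ≤ k ≤ m} (indices mod n), the left gcd of two simple elements s = Π(x_i,…;k) and t = Π(x_j,…;l) with k ≤ l satisfies: s ∧_L t = e if i ≠ j and l < m, and s ∧_L t = s if i = j or l = m. In particular s ∧_L t ∈ {e, s, t} for all simple s, t. -/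
/-!
Every element of `G_{n,m}` has a normal form `Δ^e · B_r ⋯ B_1`, where each `B` is a proper
simple element `Π(x_b, …; t)` with `0 < t < m` and no `B_{p+1}` continues the letters of `B_p`.
Right multiplication by a generator acts on normal forms: it extends the last block, starts a new
one, or completes a block to `Δ`, which is moved to the front at the price of shifting all indices
by `m`. This is a right action of `G_{n,m}`, and evaluating the image of the empty normal form
under `g` gives back `g`; so `g` is positive exactly when the exponent `e` of its normal form is
nonnegative. Multiplying by `Π(x_i, …; k)` with `k < m` raises `e` by at most one, and only if
these letters continue the last block. Hence if `u · Π(x_i, …; k)` and `u · Π(x_j, …; l)` are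
positive but `u` is not, both runs continue the same block and `i = j`. This gives the gcd `e`
for `i ≠ j`; in the remaining cases `s` is a prefix of `t`.
-/


/-- The alternating-cyclic word `Π(x_i, x_{i+1}, …; k)` (indices mod `n`)
in the free group on `n` generators. -/
def prodGWord (n : ℕ) (hn : 0 < n) (i k : ℕ) : FreeGroup (Fin n) :=
  ((List.range k).map (fun j => FreeGroup.of (⟨(i + j) % n, Nat.mod_lt _ hn⟩ : Fin n))).prod

/-- The defining relators of `G_{n,m}`:
`Π(x₁,…,xₙ;m) = Π(x₂,…,xₙ,x₁;m) = … = Π(xₙ,x₁,…,x_{n-1};m)`. -/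
def GnmRels (n m : ℕ) (hn : 0 < n) : Set (FreeGroup (Fin n)) :=
  {r | ∃ i < n, r = prodGWord n hn i m * (prodGWord n hn 0 m)⁻¹}

/-- The Garside group `G_{n,m}`. -/
def Gnm (n m : ℕ) (hn : 0 < n) : Type := PresentedGroup (GnmRels n m hn)

instance (n m : ℕ) (hn : 0 < n) : Group (Gnm n m hn) := by unfold Gnm; infer_instance

/-- The positive monoid of `G_{n,m}`, generated by the images of the generators. -/
def GnmPos (n m : ℕ) (hn : 0 < n) : Submonoid (Gnm n m hn) :=
  Submonoid.closure (Set.range (PresentedGroup.of : Fin n → Gnm n m hn))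

/-- The simple element `Π(x_i, x_{i+1}, …; k)` of `G_{n,m}`. -/
def GnmSimple (n m : ℕ) (hn : 0 < n) (i k : ℕ) : Gnm n m hn :=
  ((List.range k).map (fun j =>
    (PresentedGroup.of (⟨(i + j) % n, Nat.mod_lt _ hn⟩ : Fin n) : Gnm n m hn))).prod

/-- `c` is a left gcd of `s` and `t` with respect to the prefix order induced by `P`. -/
def IsLeftGCD {G : Type*} [Group G] (P : Submonoid G) (s t c : G) : Prop :=
  c⁻¹ * s ∈ P ∧ c⁻¹ * t ∈ P ∧ ∀ d : G, d⁻¹ * s ∈ P → d⁻¹ * t ∈ P → d⁻¹ * c ∈ P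

lemma prod_map_range_add {M : Type*} [Monoid M] (f : ℕ → M) (i k d : ℕ) :
    ((List.range (k + d)).map fun j => f (i + j)).prod =
      ((List.range k).map fun j => f (i + j)).prod *
        ((List.range d).map fun j => f (i + k + j)).prod := by
  simp [List.range_add, Function.comp_def, add_assoc]

lemma map_unop_apply_eq_mul_of_closure_eq_top {G X : Type*} [Group G]
    (ρ : G →* (Equiv.Perm X)ᵐᵒᵖ) (f : X → G) {S : Set G} (hS : Subgroup.closure S = ⊤)
    (hf : ∀ a ∈ S, ∀ x, f ((ρ a).unop x) = f x * a) (g : G) (x : X) :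
    f ((ρ g).unop x) = f x * g := by
  have hg : g ∈ Subgroup.closure S := hS ▸ Subgroup.mem_top g
  induction hg using Subgroup.closure_induction generalizing x with
  | mem a ha => exact hf a ha x
  | one => simp
  | mul a b _ _ ha hb => simp [ha, hb, mul_assoc]
  | inv a _ ha =>
    have := ha ((ρ a⁻¹).unop x)
    rw [← Equiv.Perm.mul_apply, ← MulOpposite.unop_mul, ← map_mul, inv_mul_cancel,
      map_one] at this
    simpa [eq_mul_inv_iff_mul_eq] using this.symm

section SimpleElements

variable {n m : ℕ} {hn : 0 < n}

lemma prodGWord_add (i k d : ℕ) :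
    prodGWord n hn i (k + d) = prodGWord n hn i k * prodGWord n hn (i + k) d :=
  prod_map_range_add (fun a => FreeGroup.of (⟨a % n, Nat.mod_lt _ hn⟩ : Fin n)) i k d

lemma GnmSimple_add (i k d : ℕ) :
    GnmSimple n m hn i (k + d) = GnmSimple n m hn i k * GnmSimple n m hn (i + k) d :=
  prod_map_range_add
    (fun a => (PresentedGroup.of (⟨a % n, Nat.mod_lt _ hn⟩ : Fin n) : Gnm n m hn)) i k d

@[simp]
lemma GnmSimple_zero (i : ℕ) : GnmSimple n m hn i 0 = 1 := rfl

lemma GnmSimple_mod (i k : ℕ) : GnmSimple n m hn (i % n) k = GnmSimple n m hn i k := by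
  simp only [GnmSimple, Nat.mod_add_mod]
  rfl

lemma of_eq_GnmSimple (a : Fin n) :
    (PresentedGroup.of a : Gnm n m hn) = GnmSimple n m hn a 1 := by
  simp [GnmSimple, Nat.mod_eq_of_lt a.isLt]

lemma GnmSimple_mem (i k : ℕ) : GnmSimple n m hn i k ∈ GnmPos n m hn := by
  refine Submonoid.list_prod_mem _ fun _ hg => ?_
  obtain ⟨j, -, rfl⟩ := List.mem_map.mp hg
  exact Submonoid.subset_closure ⟨_, rfl⟩

lemma GnmSimple_inv_mul_mem {i k l : ℕ} (hkl : k ≤ l) :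
    (GnmSimple n m hn i k)⁻¹ * GnmSimple n m hn i l ∈ GnmPos n m hn := by
  obtain ⟨d, rfl⟩ := Nat.exists_eq_add_of_le hkl
  rw [GnmSimple_add, inv_mul_cancel_left]
  exact GnmSimple_mem _ _

lemma mk_prodGWord (i k : ℕ) :
    PresentedGroup.mk (GnmRels n m hn) (prodGWord n hn i k) = GnmSimple n m hn i k := by
  simp only [prodGWord, GnmSimple, map_list_prod, List.map_map]
  rfl

lemma GnmSimple_m_eq (i : ℕ) : GnmSimple n m hn i m = GnmSimple n m hn 0 m := by
  rw [← GnmSimple_mod, ← mk_prodGWord, ← mk_prodGWord]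
  exact PresentedGroup.mk_eq_mk_of_mul_inv_mem ⟨i % n, Nat.mod_lt _ hn, rfl⟩

lemma GnmSimple_mul_delta (i k : ℕ) :
    GnmSimple n m hn i k * GnmSimple n m hn 0 m =
      GnmSimple n m hn 0 m * GnmSimple n m hn (i + m) k :=
  calc GnmSimple n m hn i k * GnmSimple n m hn 0 m
      _ = GnmSimple n m hn i k * GnmSimple n m hn (i + k) m := by rw [GnmSimple_m_eq (i + k)]
      _ = GnmSimple n m hn i (m + k) := by rw [add_comm m, GnmSimple_add]
      _ = GnmSimple n m hn 0 m * GnmSimple n m hn (i + m) k := by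
        rw [GnmSimple_add, GnmSimple_m_eq]

end SimpleElements

namespace GnmNormalForm

open Fin.NatCast Fin.CommRing

/-- The block `(b, t)` stands for the simple element `Π(x_b, x_{b+1}, …; t)`. -/
abbrev Block (n : ℕ) := Fin n × ℕ

section Blocks

variable {n m : ℕ} {b c d : Fin n} {t : ℕ} {e : ℤ} {K L : List (Block n)}

def shiftBlocks (d : Fin n) (L : List (Block n)) : List (Block n) :=
  L.map fun B => (B.1 + d, B.2)

def optBlock (b : Fin n) (t : ℕ) : List (Block n) :=
  if t = 0 then [] else [(b, t)]

@[simp]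
lemma shiftBlocks_nil : shiftBlocks d ([] : List (Block n)) = [] := rfl

@[simp]
lemma shiftBlocks_cons (B : Block n) :
    shiftBlocks d (B :: K) = (B.1 + d, B.2) :: shiftBlocks d K :=
  rfl

lemma shiftBlocks_shiftBlocks : shiftBlocks d (shiftBlocks c L) = shiftBlocks (c + d) L := by
  simp [shiftBlocks, add_assoc]

lemma shiftBlocks_optBlock_append :
    shiftBlocks d (optBlock b t ++ L) = optBlock (b + d) t ++ shiftBlocks d L := by
  unfold optBlock
  split_ifs <;> rfl

variable [NeZero n]

@[simp]
lemma shiftBlocks_zero : shiftBlocks 0 L = L := by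
  simp [shiftBlocks]

def CanPrecede (b : Fin n) (K : List (Block n)) : Prop :=
  ∀ C ∈ K.head?, b ≠ C.1 + C.2

/-- Normal forms of positive elements with no factor `Δ`; the head of the list is the rightmost
block. -/
def IsNormal (m : ℕ) : List (Block n) → Prop
  | [] => True
  | B :: K => 0 < B.2 ∧ B.2 < m ∧ CanPrecede B.1 K ∧ IsNormal m K

lemma canPrecede_shiftBlocks : CanPrecede (b + d) (shiftBlocks d L) ↔ CanPrecede b L := by
  cases L <;> simp [CanPrecede, add_right_comm _ d]

lemma isNormal_shiftBlocks : IsNormal m (shiftBlocks d L) ↔ IsNormal m L := by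
  induction L with
  | nil => rfl
  | cons B K ih => simp [IsNormal, canPrecede_shiftBlocks, ih]

lemma isNormal_optBlock_append (hK : IsNormal m K) (hb : CanPrecede b K) (ht : t < m) :
    IsNormal m (optBlock b t ++ K) := by
  unfold optBlock
  split_ifs <;> simp_all [IsNormal, Nat.pos_iff_ne_zero]

def splitHead (c : Fin n) : List (Block n) → Block n × List (Block n)
  | (b, t) :: K => if c = b + t then ((b, t), K) else ((c, 0), (b, t) :: K)
  | [] => ((c, 0), [])

lemma splitHead_spec (hm : 0 < m) (hL : IsNormal m L) {B : Block n}
    (h : splitHead c L = (B, K)) :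
    B.1 + B.2 = c ∧ B.2 < m ∧ L = optBlock B.1 B.2 ++ K ∧ CanPrecede B.1 K ∧
      IsNormal m K := by
  match L, hL with
  | [], _ =>
    simp only [splitHead, Prod.mk.injEq] at h
    obtain ⟨rfl, rfl⟩ := h
    simp [optBlock, CanPrecede, IsNormal, hm]
  | (b', t') :: K', ⟨ht0, htm, hb, hK⟩ =>
    simp only [splitHead] at h
    split_ifs at h with hc <;> simp only [Prod.mk.injEq] at h <;> obtain ⟨rfl, rfl⟩ := h
    · simp [hc, htm, optBlock, ht0.ne', hb, hK]
    · exact ⟨add_zero c, hm, by simp [optBlock], by simpa [CanPrecede] using hc,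
        ht0, htm, hb, hK⟩

lemma splitHead_optBlock_append (hb : CanPrecede b K) :
    splitHead (b + (t : Fin n)) (optBlock b t ++ K) = ((b, t), K) := by
  unfold optBlock
  split_ifs with ht
  · cases K with
    | nil => simp [splitHead, ht]
    | cons C K => simp [splitHead, ht, hb C rfl]
  · simp [splitHead]

/-- Right multiplication of `Δ^e · L` by `x_c`. A block completed to `Δ` is moved to the front,
past the earlier blocks, using `Π(x_b, …; t) · Δ = Δ · Π(x_{b+m}, …; t)`. -/
def push (m : ℕ) (c : Fin n) (s : ℤ × List (Block n)) : ℤ × List (Block n) :=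
  match splitHead c s.2 with
  | ((b, t), K) => if t + 1 = m then (s.1 + 1, shiftBlocks m K) else (s.1, (b, t + 1) :: K)

/-- Right multiplication of `Δ^e · L` by `x_c⁻¹`. When `L` does not end with `x_c`, a factor
`Δ` is borrowed, using `Δ · x_c⁻¹ = Π(x_{c+1-m}, …; m - 1)`. -/
def pop (m : ℕ) (c : Fin n) : ℤ × List (Block n) → ℤ × List (Block n)
  | (e, (b, t) :: K) =>
    if c + 1 = b + t then (e, optBlock b (t - 1) ++ K)
    else
      (e - 1, optBlock (c + 1 - (m : Fin n)) (m - 1) ++ shiftBlocks (-(m : Fin n)) ((b, t) :: K))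
  | (e, []) => (e - 1, optBlock (c + 1 - (m : Fin n)) (m - 1))

lemma push_eq (h : splitHead c L = ((b, t), K)) :
    push m c (e, L) =
      if t + 1 = m then (e + 1, shiftBlocks m K) else (e, (b, t + 1) :: K) := by
  simp [push, h]

lemma pop_of_not_canPrecede (h : ¬ CanPrecede (c + 1) L) :
    ∃ b t K, L = (b, t) :: K ∧ c + 1 = b + t ∧
      pop m c (e, L) = (e, optBlock b (t - 1) ++ K) := by
  cases L with
  | nil => simp [CanPrecede] at h
  | cons C K =>
    simp only [CanPrecede, List.head?_cons, Option.mem_def, Option.some.injEq, forall_eq',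
      not_not] at h
    exact ⟨C.1, C.2, K, rfl, h, by simp [pop, h]⟩

lemma pop_of_canPrecede (h : CanPrecede (c + 1) L) :
    pop m c (e, L) =
      (e - 1, optBlock (c + 1 - (m : Fin n)) (m - 1) ++ shiftBlocks (-(m : Fin n)) L) := by
  cases L with
  | nil => simp [pop]
  | cons C K => simp [pop, h C rfl]

lemma isNormal_push (hm : 0 < m) {s : ℤ × List (Block n)} (hs : IsNormal m s.2) :
    IsNormal m (push m c s).2 := by
  obtain ⟨e, L⟩ := s
  rcases hsplit : splitHead c L with ⟨⟨b, t⟩, K⟩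
  obtain ⟨-, ht, -, hb, hK⟩ := splitHead_spec hm hs hsplit
  rw [push_eq hsplit]
  split_ifs with ht'
  · exact isNormal_shiftBlocks.mpr hK
  · exact ⟨t.succ_pos, by omega, hb, hK⟩

lemma isNormal_pop (hm : 0 < m) {s : ℤ × List (Block n)} (hs : IsNormal m s.2) :
    IsNormal m (pop m c s).2 := by
  obtain ⟨e, L⟩ := s
  by_cases hc : CanPrecede (c + 1) L
  · rw [pop_of_canPrecede hc]
    refine isNormal_optBlock_append (isNormal_shiftBlocks.mpr hs) ?_ (by omega)
    rwa [sub_eq_add_neg, canPrecede_shiftBlocks]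
  · obtain ⟨b, t, K, rfl, -, hpop⟩ := pop_of_not_canPrecede (m := m) (e := e) hc
    obtain ⟨-, htm, hb, hK⟩ := hs
    rw [hpop]
    exact isNormal_optBlock_append hK hb (by omega)

lemma pop_push (hm : 0 < m) {s : ℤ × List (Block n)} (hs : IsNormal m s.2) :
    pop m c (push m c s) = s := by
  obtain ⟨e, L⟩ := s
  rcases hsplit : splitHead c L with ⟨⟨b, t⟩, K⟩
  obtain ⟨rfl, -, rfl, hb, -⟩ := splitHead_spec hm hs hsplit
  rw [push_eq hsplit]
  split_ifs with ht
  · have hnext : b + (t : Fin n) + 1 = b + (m : Fin n) := by rw [← ht]; push_cast; ring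
    rw [pop_of_canPrecede (by rwa [hnext, canPrecede_shiftBlocks]), hnext,
      shiftBlocks_shiftBlocks, add_neg_cancel, shiftBlocks_zero, ← Nat.sub_eq_of_eq_add ht.symm]
    simp
  · simp [pop, add_assoc]

lemma push_pop (hm : 0 < m) {s : ℤ × List (Block n)} (hs : IsNormal m s.2) :
    push m c (pop m c s) = s := by
  obtain ⟨e, L⟩ := s
  by_cases hc : CanPrecede (c + 1) L
  · have hsplit :
        splitHead c (optBlock (c + 1 - (m : Fin n)) (m - 1) ++ shiftBlocks (-(m : Fin n)) L) =
          ((c + 1 - (m : Fin n), m - 1), shiftBlocks (-(m : Fin n)) L) := by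
      convert splitHead_optBlock_append (b := c + 1 - (m : Fin n)) (t := m - 1)
        (by rwa [sub_eq_add_neg, canPrecede_shiftBlocks])
      rw [Nat.cast_pred hm]
      ring
    rw [pop_of_canPrecede hc, push_eq hsplit, if_pos (Nat.sub_add_cancel hm),
      shiftBlocks_shiftBlocks, neg_add_cancel, shiftBlocks_zero, sub_add_cancel]
  · obtain ⟨b, t, K, rfl, hnext, hpop⟩ := pop_of_not_canPrecede (m := m) (e := e) hc
    obtain ⟨ht0, htm, hb, -⟩ := hs
    have hsplit : splitHead c (optBlock b (t - 1) ++ K) = ((b, t - 1), K) := by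
      convert splitHead_optBlock_append hb
      rw [Nat.cast_pred ht0, add_sub_assoc', ← hnext, add_sub_cancel_right]
    rw [hpop, push_eq hsplit, if_neg (by omega), Nat.sub_add_cancel ht0]

lemma fst_le_push (s : ℤ × List (Block n)) : s.1 ≤ (push m c s).1 := by
  obtain ⟨e, L⟩ := s
  rcases hsplit : splitHead c L with ⟨⟨b, t⟩, K⟩
  rw [push_eq hsplit]
  split_ifs <;> simp

/-- Right multiplication by `Π(x_i, x_{i+1}, …; k)`. -/
def run (m : ℕ) (i : Fin n) : ℕ → ℤ × List (Block n) → ℤ × List (Block n)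
  | 0, s => s
  | k + 1, s => run m (i + 1) k (push m i s)

lemma run_eq (hm : 0 < m) {i : Fin n} {k : ℕ} (hk : k ≤ m) (hL : IsNormal m L)
    (hsplit : splitHead i L = ((b, t), K)) :
    run m i k (e, L) =
      if t + k < m then (e, optBlock b (t + k) ++ K)
      else (e + 1, optBlock (b + (m : Fin n)) (t + k - m) ++ shiftBlocks m K) := by
  induction k generalizing i e L b t K with
  | zero =>
    obtain ⟨-, ht, rfl, -⟩ := splitHead_spec hm hL hsplit
    simp [run, ht]
  | succ k ih =>
    obtain ⟨rfl, ht, -, hb, hK⟩ := splitHead_spec hm hL hsplit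
    rw [run, push_eq hsplit]
    by_cases hcarry : t + 1 = m
    · have hnext : b + (t : Fin n) + 1 = b + (m : Fin n) := by rw [← hcarry]; push_cast; ring
      have hsplit' : splitHead (b + (t : Fin n) + 1) (shiftBlocks m K) =
          ((b + m, 0), shiftBlocks m K) := by
        rw [hnext]
        simpa [optBlock] using splitHead_optBlock_append (t := 0) (canPrecede_shiftBlocks.mpr hb)
      rw [if_pos hcarry, ih (by omega) (isNormal_shiftBlocks.mpr hK) hsplit', if_pos (by omega),
        if_neg (by omega), show t + (k + 1) - m = k by omega, zero_add]
    · have hsplit' : splitHead (b + (t : Fin n) + 1) ((b, t + 1) :: K) = ((b, t + 1), K) := by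
        simp [splitHead, add_assoc]
      have hL' : IsNormal m ((b, t + 1) :: K) := ⟨t.succ_pos, by omega, hb, hK⟩
      rw [if_neg hcarry, ih (by omega) hL' hsplit', add_right_comm, add_assoc]

lemma run_self (hm : 0 < m) {i : Fin n} (hL : IsNormal m L) :
    run m i m (e, L) = (e + 1, shiftBlocks m L) := by
  rcases hsplit : splitHead i L with ⟨⟨b, t⟩, K⟩
  obtain ⟨-, -, rfl, -⟩ := splitHead_spec hm hL hsplit
  rw [run_eq hm le_rfl hL hsplit, if_neg (by omega), Nat.add_sub_cancel,
    shiftBlocks_optBlock_append]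

lemma exists_head_of_lt_run (hm : 0 < m) {i : Fin n} {k : ℕ} (hk : k < m)
    {s : ℤ × List (Block n)} (hs : IsNormal m s.2) (he : s.1 < (run m i k s).1) :
    ∃ C ∈ s.2.head?, C.1 + C.2 = i := by
  obtain ⟨e, L⟩ := s
  rcases hsplit : splitHead i L with ⟨⟨b, t⟩, K⟩
  obtain ⟨hnext, -, rfl, -⟩ := splitHead_spec hm hs hsplit
  rw [run_eq hm hk.le hs hsplit] at he
  split_ifs at he with hfits
  · exact absurd he (lt_irrefl e)
  · exact ⟨(b, t), by simp [optBlock, show t ≠ 0 by omega], hnext⟩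

end Blocks

section Evaluation

variable {n m : ℕ} {hn : 0 < n}

variable (m) in
def blocksProd (hn : 0 < n) : List (Block n) → Gnm n m hn
  | [] => 1
  | B :: K => blocksProd hn K * GnmSimple n m hn B.1 B.2

variable (m) in
def stateVal (hn : 0 < n) (s : ℤ × List (Block n)) : Gnm n m hn :=
  GnmSimple n m hn 0 m ^ s.1 * blocksProd m hn s.2

lemma blocksProd_optBlock_append (b : Fin n) (t : ℕ) (K : List (Block n)) :
    blocksProd m hn (optBlock b t ++ K) = blocksProd m hn K * GnmSimple n m hn b t := by
  unfold optBlock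
  split_ifs with ht <;> simp [blocksProd, ht]

lemma blocksProd_mem_GnmPos (L : List (Block n)) : blocksProd m hn L ∈ GnmPos n m hn := by
  induction L with
  | nil => exact one_mem _
  | cons B K ih => exact mul_mem ih (GnmSimple_mem _ _)

lemma stateVal_mem_GnmPos {s : ℤ × List (Block n)} (he : 0 ≤ s.1) :
    stateVal m hn s ∈ GnmPos n m hn := by
  obtain ⟨e, L⟩ := s
  lift e to ℕ using he
  rw [stateVal, zpow_natCast]
  exact mul_mem (pow_mem (GnmSimple_mem 0 m) e) (blocksProd_mem_GnmPos L)

variable [NeZero n]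

lemma GnmSimple_val_add (b : Fin n) (t k : ℕ) :
    GnmSimple n m hn (b + (t : Fin n) : Fin n) k = GnmSimple n m hn (b + t) k := by
  rw [Fin.val_add, Fin.val_natCast, Nat.add_mod_mod, GnmSimple_mod]

lemma blocksProd_mul_delta (K : List (Block n)) :
    blocksProd m hn K * GnmSimple n m hn 0 m =
      GnmSimple n m hn 0 m * blocksProd m hn (shiftBlocks m K) := by
  induction K with
  | nil => simp [blocksProd]
  | cons B K ih =>
    rw [shiftBlocks_cons, blocksProd, blocksProd, mul_assoc, GnmSimple_mul_delta, ← mul_assoc, ih,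
      mul_assoc, GnmSimple_val_add]

lemma stateVal_push (hm : 0 < m) (c : Fin n) {s : ℤ × List (Block n)} (hs : IsNormal m s.2) :
    stateVal m hn (push m c s) = stateVal m hn s * GnmSimple n m hn c 1 := by
  obtain ⟨e, L⟩ := s
  rcases hsplit : splitHead c L with ⟨⟨b, t⟩, K⟩
  obtain ⟨rfl, -, rfl, -⟩ := splitHead_spec hm hs hsplit
  have hgrow : GnmSimple n m hn b t * GnmSimple n m hn (b + (t : Fin n) : Fin n) 1 =
      GnmSimple n m hn b (t + 1) := by
    rw [GnmSimple_val_add, GnmSimple_add]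
  rw [push_eq hsplit, stateVal, stateVal, blocksProd_optBlock_append, mul_assoc, mul_assoc, hgrow]
  split_ifs with hcarry
  · rw [zpow_add_one, mul_assoc, ← blocksProd_mul_delta, hcarry, GnmSimple_m_eq (b : ℕ)]
  · rfl

end Evaluation

section Action

variable {n m : ℕ} [NeZero n] (hm : 0 < m)

variable (n m) in
def State : Type := {s : ℤ × List (Block n) // IsNormal m s.2}

def pushPerm (c : Fin n) : Equiv.Perm (State n m) where
  toFun x := ⟨push m c x.1, isNormal_push hm x.2⟩
  invFun x := ⟨pop m c x.1, isNormal_pop hm x.2⟩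
  left_inv x := Subtype.ext (pop_push hm x.2)
  right_inv x := Subtype.ext (push_pop hm x.2)

@[simp]
lemma pushPerm_apply_val (c : Fin n) (x : State n m) : (pushPerm hm c x).1 = push m c x.1 := rfl

lemma lift_prodGWord_apply (hn : 0 < n) (i k : ℕ) (x : State n m) :
    ((FreeGroup.lift (MulOpposite.op ∘ pushPerm hm) (prodGWord n hn i k)).unop x).1 =
      run m (i : Fin n) k x.1 := by
  induction k generalizing i x with
  | zero => rfl
  | succ k ih =>
    have hletter : (⟨i % n, Nat.mod_lt _ hn⟩ : Fin n) = i := Fin.ext (Fin.val_natCast i n).symm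
    rw [run, add_comm k 1, prodGWord_add, map_mul, MulOpposite.unop_mul, Equiv.Perm.mul_apply, ih,
      Nat.cast_succ]
    simp [prodGWord, hletter]

def rightAction (hn : 0 < n) : Gnm n m hn →* (Equiv.Perm (State n m))ᵐᵒᵖ :=
  PresentedGroup.toGroup (f := MulOpposite.op ∘ pushPerm hm) <| by
    rintro _ ⟨a, -, rfl⟩
    rw [map_mul, map_inv, mul_inv_eq_one]
    refine MulOpposite.unop_injective (Equiv.ext fun x => Subtype.ext ?_)
    rw [lift_prodGWord_apply, lift_prodGWord_apply, run_self hm x.2, run_self hm x.2]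

variable {hn : 0 < n}

def act (g : Gnm n m hn) (x : State n m) : State n m := (rightAction hm hn g).unop x

lemma act_mul (g h : Gnm n m hn) (x : State n m) :
    act hm (g * h) x = act hm h (act hm g x) := by
  simp [act]

lemma act_GnmSimple (i k : ℕ) (x : State n m) :
    (act hm (GnmSimple n m hn i k) x).1 = run m (i : Fin n) k x.1 := by
  rw [← mk_prodGWord]
  exact lift_prodGWord_apply hm hn i k x

lemma act_GnmSimple_one (c : Fin n) (x : State n m) :
    (act hm (GnmSimple n m hn c 1) x).1 = push m c x.1 := by
  rw [act_GnmSimple, Fin.cast_val_eq_self]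
  rfl

lemma stateVal_act (g : Gnm n m hn) (x : State n m) :
    stateVal m hn (act hm g x).1 = stateVal m hn x.1 * g := by
  refine map_unop_apply_eq_mul_of_closure_eq_top (rightAction hm hn) (fun x => stateVal m hn x.1)
    (PresentedGroup.closure_range_of _) ?_ g x
  rintro _ ⟨c, rfl⟩ x
  rw [of_eq_GnmSimple]
  exact (congrArg _ (act_GnmSimple_one hm c x)).trans (stateVal_push hm c x.2)

lemma fst_le_act {g : Gnm n m hn} (hg : g ∈ GnmPos n m hn) (x : State n m) :
    x.1.1 ≤ (act hm g x).1.1 := by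
  induction hg using Submonoid.closure_induction generalizing x with
  | mem _ h =>
    obtain ⟨c, rfl⟩ := h
    rw [of_eq_GnmSimple, act_GnmSimple_one]
    exact fst_le_push x.1
  | one => simp [act]
  | mul g h _ _ hg hh =>
    rw [act_mul]
    exact (hg x).trans (hh _)

def initState : State n m := ⟨(0, []), trivial⟩

lemma mem_GnmPos_iff (g : Gnm n m hn) : g ∈ GnmPos n m hn ↔ 0 ≤ (act hm g initState).1.1 := by
  refine ⟨fun hg => fst_le_act hm hg initState, fun he => ?_⟩
  have hval := stateVal_act hm g initState
  rw [show stateVal m hn initState.1 = 1 by simp [stateVal, blocksProd, initState], one_mul] at hval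
  exact hval ▸ stateVal_mem_GnmPos he

end Action

end GnmNormalForm

open GnmNormalForm Fin.NatCast in
theorem mem_GnmPos_of_mul_GnmSimple_mem {n m : ℕ} {hn : 0 < n} {i j k l : ℕ} (hi : i < n)
    (hj : j < n) (hij : i ≠ j) (hk : k < m) (hl : l < m) {u : Gnm n m hn}
    (hs : u * GnmSimple n m hn i k ∈ GnmPos n m hn)
    (ht : u * GnmSimple n m hn j l ∈ GnmPos n m hn) : u ∈ GnmPos n m hn := by
  have := NeZero.of_pos hn
  have hm : 0 < m := by omega
  rw [mem_GnmPos_iff hm] at hs ht ⊢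
  by_contra! hu
  set x := act hm u initState
  have next_eq {a r : ℕ} (hr : r < m)
      (h : 0 ≤ (act hm (u * GnmSimple n m hn a r) initState).1.1) :
      ∃ C ∈ x.1.2.head?, C.1 + C.2 = (a : Fin n) := by
    rw [act_mul, act_GnmSimple] at h
    exact exists_head_of_lt_run hm hr x.2 (hu.trans_le h)
  obtain ⟨C, hC, hCi⟩ := next_eq hk hs
  obtain ⟨C', hC', hCj⟩ := next_eq hl ht
  obtain rfl : C = C' := Option.mem_unique hC hC'
  have hij' := congrArg Fin.val (hCi.symm.trans hCj)
  rw [Fin.val_cast_of_lt hi, Fin.val_cast_of_lt hj] at hij'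
  exact hij hij'

theorem Gnm_simple_left_gcd_general (n m : ℕ) (hn : 0 < n)
    (i j k l : ℕ) (hi : i < n) (hj : j < n) (hkl : k ≤ l) (hlm : l ≤ m) :
    ((i ≠ j ∧ l < m) →
      IsLeftGCD (GnmPos n m hn) (GnmSimple n m hn i k) (GnmSimple n m hn j l) 1) ∧
    ((i = j ∨ l = m) →
      IsLeftGCD (GnmPos n m hn) (GnmSimple n m hn i k) (GnmSimple n m hn j l)
        (GnmSimple n m hn i k)) ∧
    (∃ c ∈ ({1, GnmSimple n m hn i k, GnmSimple n m hn j l} : Set (Gnm n m hn)),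
      IsLeftGCD (GnmPos n m hn) (GnmSimple n m hn i k) (GnmSimple n m hn j l) c) := by
  have gcd_one (h : i ≠ j ∧ l < m) :
      IsLeftGCD (GnmPos n m hn) (GnmSimple n m hn i k) (GnmSimple n m hn j l) 1 := by
    refine ⟨by simpa using GnmSimple_mem i k, by simpa using GnmSimple_mem j l,
      fun d hs ht => ?_⟩
    simpa using mem_GnmPos_of_mul_GnmSimple_mem hi hj h.1 (hkl.trans_lt h.2) h.2 hs ht
  have gcd_self (h : i = j ∨ l = m) :
      IsLeftGCD (GnmPos n m hn) (GnmSimple n m hn i k) (GnmSimple n m hn j l)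
        (GnmSimple n m hn i k) := by
    refine ⟨by simp [one_mem], ?_, fun d hs _ => hs⟩
    rcases h with rfl | rfl
    · exact GnmSimple_inv_mul_mem hkl
    · rw [GnmSimple_m_eq j, ← GnmSimple_m_eq i]
      exact GnmSimple_inv_mul_mem hkl
  refine ⟨gcd_one, gcd_self, ?_⟩
  by_cases h : i = j ∨ l = m
  · exact ⟨_, by simp, gcd_self h⟩
  · push Not at h
    exact ⟨1, by simp, gcd_one ⟨h.1, hlm.lt_of_ne h.2⟩⟩

/-- In `G_{n,m}`, for simple elements `s = Π(x_i,…;k)` and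
`t = Π(x_j,…;l)` with `k ≤ l ≤ m`: the left gcd `s ∧_L t` is `e` when `i ≠ j`
and `l < m`, and is `s` when `i = j` or `l = m`; in particular
`s ∧_L t ∈ {e, s, t}`. -/
theorem Gnm_simple_left_gcd (n m : ℕ) (hn : 0 < n) (hm : 0 < m)
    (i j k l : ℕ) (hi : i < n) (hj : j < n) (hkl : k ≤ l) (hlm : l ≤ m) :
    ((i ≠ j ∧ l < m) →
      IsLeftGCD (GnmPos n m hn) (GnmSimple n m hn i k) (GnmSimple n m hn j l) 1) ∧
    ((i = j ∨ l = m) →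
      IsLeftGCD (GnmPos n m hn) (GnmSimple n m hn i k) (GnmSimple n m hn j l)
        (GnmSimple n m hn i k)) ∧
    (∃ c ∈ ({1, GnmSimple n m hn i k, GnmSimple n m hn j l} : Set (Gnm n m hn)),
      IsLeftGCD (GnmPos n m hn) (GnmSimple n m hn i k) (GnmSimple n m hn j l) c) :=
  Gnm_simple_left_gcd_general n m hn i j k l hi hj hkl hlm
end

section
/- Let G be a Garside group of finite type with set of atoms A and simple elements S, Garside element Δ ∉ A, and suppose s ∧_L t ∈ {e,s,t} and s ∧_R t ∈ {e,s,t} for all s,t ∈ S. Define ξ: A → A by ξ(a) = the unique atom b with ab ∈ S, and ρ: A → A by ρ(a) = the unique atom b with ba ∈ S. Then ξ and ρ are mutually inverse bijections of the finite set A; in particular ξ is a permutation of A. -/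
section Aux

variable {G : Type*} [Group G] (g : GarsideStruct G)

/-- Every positive element is `1`, simple, or a product of two nontrivial positives. -/
lemma GarsideStruct.decompose {x : G} (hx : x ∈ g.P) :
    x = 1 ∨ x ∈ g.simples ∨
      ∃ u v, u ∈ g.P ∧ v ∈ g.P ∧ u ≠ 1 ∧ v ≠ 1 ∧ x = u * v := by
  have hx' := g.simples_generate hx
  have key : ∀ y ∈ Submonoid.closure {a : G | a ∈ g.P ∧ a⁻¹ * g.Δ ∈ g.P},
      y ∈ g.P ∧ (y = 1 ∨ y ∈ g.simples ∨
        ∃ u v, u ∈ g.P ∧ v ∈ g.P ∧ u ≠ 1 ∧ v ≠ 1 ∧ y = u * v) := by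
    intro y hy
    induction hy using Submonoid.closure_induction with
    | mem z hz => exact ⟨hz.1, Or.inr (Or.inl hz)⟩
    | one => exact ⟨g.P.one_mem, Or.inl rfl⟩
    | mul z w _ _ hz hw =>
      refine ⟨g.P.mul_mem hz.1 hw.1, ?_⟩
      by_cases hz1 : z = 1
      · subst hz1; simpa using hw.2
      · by_cases hw1 : w = 1
        · subst hw1; simpa using hz.2
        · exact Or.inr (Or.inr ⟨z, w, hz.1, hw.1, hz1, hw1, rfl⟩)
  exact (key x hx').2

lemma GarsideStruct.atom_simple {a : G} (ha : g.IsAtomP a) : a ∈ g.simples := by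
  rcases g.decompose ha.1 with h | h | ⟨u, v, hu, hv, hu1, hv1, huv⟩
  · exact absurd h ha.2.1
  · exact h
  · exact absurd huv.symm (ha.2.2 u v hu hv hu1 hv1)

/-- Every nontrivial positive element has an atom as a left divisor. -/
lemma GarsideStruct.exists_atom_left {x : G} (hx : x ∈ g.P) (hx1 : x ≠ 1) :
    ∃ b, g.IsAtomP b ∧ b⁻¹ * x ∈ g.P := by
  obtain ⟨N, hN⟩ := g.atomic x hx hx1
  have main : ∀ N : ℕ, ∀ x : G, x ∈ g.P → x ≠ 1 →
      (∀ l : List G, (∀ a ∈ l, a ∈ g.P ∧ a ≠ 1) → l.prod = x → l.length ≤ N) →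
      ∃ b, g.IsAtomP b ∧ b⁻¹ * x ∈ g.P := by
    intro N
    induction N with
    | zero =>
      intro x hx hx1 hN
      have := hN [x] (by intro a ha; simp at ha; subst ha; exact ⟨hx, hx1⟩) (by simp)
      simp at this
    | succ n ih =>
      intro x hx hx1 hN
      by_cases hat : g.IsAtomP x
      · exact ⟨x, hat, by simp [g.P.one_mem]⟩
      · simp only [GarsideStruct.IsAtomP, not_and, not_forall] at hat
        obtain ⟨u, v, hu, hv, hu1, hv1, huv⟩ := by
          have := hat hx hx1
          push_neg at this
          exact this
        have hbound : ∀ l : List G, (∀ a ∈ l, a ∈ g.P ∧ a ≠ 1) → l.prod = u →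
            l.length ≤ n := by
          intro l hl hlp
          have hmem : ∀ a ∈ l ++ [v], a ∈ g.P ∧ a ≠ 1 := by
            intro a hal
            rcases List.mem_append.mp hal with h | h
            · exact hl a h
            · simp at h; subst h; exact ⟨hv, hv1⟩
          have h2 := hN (l ++ [v]) hmem (by simp [hlp, huv])
          simpa using h2
        obtain ⟨b, hb, hbu⟩ := ih u hu hu1 hbound
        refine ⟨b, hb, ?_⟩
        have h : b⁻¹ * x = (b⁻¹ * u) * v := by rw [← huv]; group
        rw [h]
        exact g.P.mul_mem hbu hv
  exact main N x hx hx1 hN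

/-- Every nontrivial positive element has an atom as a right divisor. -/
lemma GarsideStruct.exists_atom_right {x : G} (hx : x ∈ g.P) (hx1 : x ≠ 1) :
    ∃ b, g.IsAtomP b ∧ x * b⁻¹ ∈ g.P := by
  obtain ⟨N, hN⟩ := g.atomic x hx hx1
  have main : ∀ N : ℕ, ∀ x : G, x ∈ g.P → x ≠ 1 →
      (∀ l : List G, (∀ a ∈ l, a ∈ g.P ∧ a ≠ 1) → l.prod = x → l.length ≤ N) →
      ∃ b, g.IsAtomP b ∧ x * b⁻¹ ∈ g.P := by
    intro N
    induction N with
    | zero =>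
      intro x hx hx1 hN
      have := hN [x] (by intro a ha; simp at ha; subst ha; exact ⟨hx, hx1⟩) (by simp)
      simp at this
    | succ n ih =>
      intro x hx hx1 hN
      by_cases hat : g.IsAtomP x
      · exact ⟨x, hat, by simp [g.P.one_mem]⟩
      · simp only [GarsideStruct.IsAtomP, not_and, not_forall] at hat
        obtain ⟨u, v, hu, hv, hu1, hv1, huv⟩ := by
          have := hat hx hx1
          push_neg at this
          exact this
        have hbound : ∀ l : List G, (∀ a ∈ l, a ∈ g.P ∧ a ≠ 1) → l.prod = v →
            l.length ≤ n := by
          intro l hl hlp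
          have hmem : ∀ a ∈ u :: l, a ∈ g.P ∧ a ≠ 1 := by
            intro a hal
            rcases List.mem_cons.mp hal with h | h
            · subst h; exact ⟨hu, hu1⟩
            · exact hl a h
          have h2 := hN (u :: l) hmem (by simp [hlp, huv])
          simpa using h2
        obtain ⟨b, hb, hbv⟩ := ih v hv hv1 hbound
        refine ⟨b, hb, ?_⟩
        have h : x * b⁻¹ = u * (v * b⁻¹) := by rw [← huv]; group
        rw [h]
        exact g.P.mul_mem hu hbv
  exact main N x hx hx1 hN

lemma GarsideStruct.exists_xi (hΔ : ¬ g.IsAtomP g.Δ) {a : G} (ha : g.IsAtomP a) :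
    ∃ b, g.IsAtomP b ∧ a * b ∈ g.simples := by
  have haS : a ∈ g.simples := g.atom_simple ha
  have hc : a⁻¹ * g.Δ ∈ g.P := haS.2
  have hc1 : a⁻¹ * g.Δ ≠ 1 := by
    intro h
    have : a = g.Δ := by
      have := congrArg (a * ·) h
      simpa [mul_assoc] using this.symm
    exact hΔ (this ▸ ha)
  obtain ⟨b, hb, hbc⟩ := g.exists_atom_left hc hc1
  refine ⟨b, hb, g.P.mul_mem ha.1 hb.1, ?_⟩
  have h : (a * b)⁻¹ * g.Δ = b⁻¹ * (a⁻¹ * g.Δ) := by group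
  rw [h]
  exact hbc

lemma GarsideStruct.exists_rho (hΔ : ¬ g.IsAtomP g.Δ) {a : G} (ha : g.IsAtomP a) :
    ∃ b, g.IsAtomP b ∧ b * a ∈ g.simples := by
  have haS : a ∈ g.simples := g.atom_simple ha
  have hc : g.Δ * a⁻¹ ∈ g.P := ((g.balanced a).mp haS).2
  have hc1 : g.Δ * a⁻¹ ≠ 1 := by
    intro h
    have : a = g.Δ := by
      have := congrArg (· * a) h
      simpa [mul_assoc] using this.symm
    exact hΔ (this ▸ ha)
  obtain ⟨b, hb, hbc⟩ := g.exists_atom_right hc hc1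
  have hba : b * a ∈ g.P := g.P.mul_mem hb.1 ha.1
  refine ⟨b, hb, ((g.balanced (b * a)).mpr ⟨hba, ?_⟩)⟩
  have h : g.Δ * (b * a)⁻¹ = (g.Δ * a⁻¹) * b⁻¹ := by group
  rw [h]
  exact hbc

lemma GarsideStruct.atom_eq_of_pos_div {b b' : G} (hb : g.IsAtomP b)
    (hb' : g.IsAtomP b') (h : b⁻¹ * b' ∈ g.P) : b = b' := by
  by_cases h1 : b⁻¹ * b' = 1
  · have := congrArg (b * ·) h1
    simpa [mul_assoc] using this.symm
  · exact absurd (by group : b * (b⁻¹ * b') = b')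
      (hb'.2.2 b (b⁻¹ * b') hb.1 h hb.2.1 h1)

lemma GarsideStruct.uniq_xi
    (htriL : ∀ s ∈ g.simples, ∀ t ∈ g.simples, g.meetL s t ∈ ({1, s, t} : Set G))
    {a b b' : G} (ha : g.IsAtomP a) (hb : g.IsAtomP b) (hb' : g.IsAtomP b')
    (hs : a * b ∈ g.simples) (ht : a * b' ∈ g.simples) : b = b' := by
  have hm := g.meetL_greatest (a * b) (a * b') a
    (by simpa [mul_assoc] using hb.1) (by simpa [mul_assoc] using hb'.1)
  rcases htriL _ hs _ ht with h | h | h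
  · exfalso
    rw [h, mul_one] at hm
    exact ha.2.1 (g.inf_trivial a ha.1 hm)
  · -- meetL = a*b, so (a*b)⁻¹ * (a*b') = b⁻¹ * b' ∈ P
    have := g.meetL_le_right (a * b) (a * b')
    rw [h] at this
    have hd : b⁻¹ * b' ∈ g.P := by
      have e : (a * b)⁻¹ * (a * b') = b⁻¹ * b' := by group
      rwa [e] at this
    exact g.atom_eq_of_pos_div hb hb' hd
  · have := g.meetL_le_left (a * b) (a * b')
    rw [h] at this
    have hd : b'⁻¹ * b ∈ g.P := by
      have e : (a * b')⁻¹ * (a * b) = b'⁻¹ * b := by group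
      rwa [e] at this
    exact (g.atom_eq_of_pos_div hb' hb hd).symm

lemma GarsideStruct.atom_eq_of_pos_div' {b b' : G} (hb : g.IsAtomP b)
    (hb' : g.IsAtomP b') (h : b' * b⁻¹ ∈ g.P) : b = b' := by
  by_cases h1 : b' * b⁻¹ = 1
  · have := congrArg (· * b) h1
    simpa [mul_assoc] using this.symm
  · exact absurd (by group : (b' * b⁻¹) * b = b')
      (hb'.2.2 (b' * b⁻¹) b h hb.1 h1 hb.2.1)

lemma GarsideStruct.uniq_rho
    (htriR : ∀ s ∈ g.simples, ∀ t ∈ g.simples, g.meetR s t ∈ ({1, s, t} : Set G))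
    {a b b' : G} (ha : g.IsAtomP a) (hb : g.IsAtomP b) (hb' : g.IsAtomP b')
    (hs : b * a ∈ g.simples) (ht : b' * a ∈ g.simples) : b = b' := by
  have hm := g.meetR_greatest (b * a) (b' * a) a
    (by simpa [mul_assoc] using hb.1) (by simpa [mul_assoc] using hb'.1)
  rcases htriR _ hs _ ht with h | h | h
  · exfalso
    rw [h, one_mul] at hm
    have : a = 1 := by
      have h2 : a⁻¹⁻¹ = a := inv_inv a
      exact inv_injective (by simpa using (g.inf_trivial a⁻¹ hm (by simpa using ha.1)))
    exact ha.2.1 this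
  · have := g.meetR_le_right (b * a) (b' * a)
    rw [h] at this
    have hd : b' * b⁻¹ ∈ g.P := by
      have e : (b' * a) * (b * a)⁻¹ = b' * b⁻¹ := by group
      rwa [e] at this
    exact g.atom_eq_of_pos_div' hb hb' hd
  · have := g.meetR_le_left (b * a) (b' * a)
    rw [h] at this
    have hd : b * b'⁻¹ ∈ g.P := by
      have e : (b * a) * (b' * a)⁻¹ = b * b'⁻¹ := by group
      rwa [e] at this
    exact (g.atom_eq_of_pos_div' hb' hb hd).symm

end Aux

/-- In a finite-type Garside group with `Δ` not an atom and the gcd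
trichotomy `s ∧_L t, s ∧_R t ∈ {e,s,t}` on simples, the maps `ξ` (unique atom
`b` with `ab` simple) and `ρ` (unique atom `b` with `ba` simple) are well-defined
mutually inverse bijections of the set of atoms; in particular `ξ` is a permutation. -/
theorem xi_rho_mutually_inverse {G : Type*} [Group G] (g : GarsideStruct G)
    (hfin : g.simples.Finite)
    (hΔ : ¬ g.IsAtomP g.Δ)
    (htriL : ∀ s ∈ g.simples, ∀ t ∈ g.simples, g.meetL s t ∈ ({1, s, t} : Set G))
    (htriR : ∀ s ∈ g.simples, ∀ t ∈ g.simples, g.meetR s t ∈ ({1, s, t} : Set G)) :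
    ∃ ξ ρ : {a : G // g.IsAtomP a} → {a : G // g.IsAtomP a},
      (∀ a, a.1 * (ξ a).1 ∈ g.simples) ∧
      (∀ a b, a.1 * b.1 ∈ g.simples → b = ξ a) ∧
      (∀ a, (ρ a).1 * a.1 ∈ g.simples) ∧
      (∀ a b, b.1 * a.1 ∈ g.simples → b = ρ a) ∧
      Function.LeftInverse ρ ξ ∧ Function.RightInverse ρ ξ ∧
      Function.Bijective ξ := by
  have hexL : ∀ a : {a : G // g.IsAtomP a}, ∃ b : {a : G // g.IsAtomP a},
      a.1 * b.1 ∈ g.simples := by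
    intro a
    obtain ⟨b, hb, hab⟩ := g.exists_xi hΔ a.2
    exact ⟨⟨b, hb⟩, hab⟩
  have hexR : ∀ a : {a : G // g.IsAtomP a}, ∃ b : {a : G // g.IsAtomP a},
      b.1 * a.1 ∈ g.simples := by
    intro a
    obtain ⟨b, hb, hab⟩ := g.exists_rho hΔ a.2
    exact ⟨⟨b, hb⟩, hab⟩
  choose ξ hξ using hexL
  choose ρ hρ using hexR
  have huξ : ∀ a b, a.1 * b.1 ∈ g.simples → b = ξ a := by
    intro a b h
    exact Subtype.ext (g.uniq_xi htriL a.2 b.2 (ξ a).2 h (hξ a))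
  have huρ : ∀ a b, b.1 * a.1 ∈ g.simples → b = ρ a := by
    intro a b h
    exact Subtype.ext (g.uniq_rho htriR a.2 b.2 (ρ a).2 h (hρ a))
  have hli : Function.LeftInverse ρ ξ := fun a => (huρ (ξ a) a (hξ a)).symm
  have hri : Function.RightInverse ρ ξ := fun a => (huξ (ρ a) a (hρ a)).symm
  exact ⟨ξ, ρ, hξ, huξ, hρ, huρ, hli, hri, hli.injective, hri.surjective⟩
end

section
/- Let S be a set with maps and relations as follows: S = {a,b,c,d,u,v,w,x} and R₃ = {vbw⁻¹, xcw⁻¹, uxd⁻¹, uva⁻¹} interpreted in the free group F(u,v,w,x) via a = uv, b = v⁻¹w, c = x⁻¹w, d = ux. Then the group ⟨S ∣ R₃⟩ is isomorphic to the free group F(u,v,w,x), and in F(u,v,w,x) with S = {uv, v⁻¹w, x⁻¹w, ux, u, v, w, x} one has: for all α,β,γ ∈ S, αβγ ≠ e and αβγ ∉ S. -/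
/-- Generators `a,b,c,d,u,v,w,x` numbered `0,…,7`; the relator set
`R₃ = {vbw⁻¹, xcw⁻¹, uxd⁻¹, uva⁻¹}`. -/
def relsR3 : Set (FreeGroup (Fin 8)) :=
  { FreeGroup.of (5 : Fin 8) * FreeGroup.of (1 : Fin 8) * (FreeGroup.of (6 : Fin 8))⁻¹,
    FreeGroup.of (7 : Fin 8) * FreeGroup.of (2 : Fin 8) * (FreeGroup.of (6 : Fin 8))⁻¹,
    FreeGroup.of (4 : Fin 8) * FreeGroup.of (7 : Fin 8) * (FreeGroup.of (3 : Fin 8))⁻¹,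
    FreeGroup.of (4 : Fin 8) * FreeGroup.of (5 : Fin 8) * (FreeGroup.of (0 : Fin 8))⁻¹ }

/-- The subset `S = {uv, v⁻¹w, x⁻¹w, ux, u, v, w, x}` of the free group
`F(u,v,w,x)` on generators `u,v,w,x` numbered `0,1,2,3`. -/
def setS9 : Set (FreeGroup (Fin 4)) :=
  { FreeGroup.of 0 * FreeGroup.of 1, (FreeGroup.of 1)⁻¹ * FreeGroup.of 2,
    (FreeGroup.of 3)⁻¹ * FreeGroup.of 2, FreeGroup.of 0 * FreeGroup.of 3,
    FreeGroup.of 0, FreeGroup.of 1, FreeGroup.of 2, FreeGroup.of 3 }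

/-!
Eliminating `a = uv`, `b = v⁻¹w`, `c = x⁻¹w`, `d = ux` by Tietze transformations leaves `u, v, w, x`
with no relations.

The second claim follows from a grading alone: give `u, v, x` degree `2` and `w` degree `5`. The
elements of `S` then have degrees `4, 3, 3, 4, 2, 2, 5, 2`, all in `[2, 5]`, so a product of three of
them has degree at least `6` and can be neither `1` nor an element of `S`.
-/

section Grading

variable {G H : Type*} [Monoid G] [CommMonoid H] [Preorder H] [IsOrderedMonoid H]

theorem mul_mul_notMem_of_map_lt_pow_three (f : G →* H) {S T : Set G} {m : H}
    (hS : ∀ s ∈ S, m ≤ f s) (hT : ∀ t ∈ T, f t < m ^ 3) {α β γ : G}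
    (hα : α ∈ S) (hβ : β ∈ S) (hγ : γ ∈ S) : α * β * γ ∉ T := fun h => by
  have hle : m ^ 3 ≤ f (α * β * γ) := by
    rw [pow_three', map_mul, map_mul]
    exact mul_le_mul' (mul_le_mul' (hS α hα) (hS β hβ)) (hS γ hγ)
  exact (hle.trans_lt (hT _ h)).false

end Grading

def weightedDegree : FreeGroup (Fin 4) →* Multiplicative ℤ :=
  FreeGroup.lift fun i => .ofAdd (![2, 2, 5, 2] i)

theorem two_le_weightedDegree_of_mem_setS9 {s : FreeGroup (Fin 4)} (hs : s ∈ setS9) :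
    .ofAdd 2 ≤ weightedDegree s := by
  simp only [setS9, Set.mem_insert_iff, Set.mem_singleton_iff] at hs
  rcases hs with rfl | rfl | rfl | rfl | rfl | rfl | rfl | rfl <;> decide

theorem weightedDegree_lt_six_of_mem_insert_one_setS9 {t : FreeGroup (Fin 4)}
    (ht : t ∈ insert 1 setS9) : weightedDegree t < .ofAdd 6 := by
  simp only [setS9, Set.mem_insert_iff, Set.mem_singleton_iff] at ht
  rcases ht with rfl | rfl | rfl | rfl | rfl | rfl | rfl | rfl | rfl <;> decide

namespace PresentedGroup

variable {α : Type*} {rels : Set (FreeGroup α)} {i j k : α}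

theorem of_mul_of_eq_of_mul_inv_mem (h : .of i * .of j * (.of k)⁻¹ ∈ rels) :
    (of i * of j : PresentedGroup rels) = of k :=
  mk_eq_mk_of_mul_inv_mem h

theorem inv_of_mul_of_eq_of_mul_inv_mem (h : .of i * .of j * (.of k)⁻¹ ∈ rels) :
    ((of i)⁻¹ * of k : PresentedGroup rels) = of j :=
  inv_mul_eq_of_eq_mul (of_mul_of_eq_of_mul_inv_mem h).symm

end PresentedGroup

open FreeGroup

def tietzeImage : Fin 8 → FreeGroup (Fin 4) :=
  ![of 0 * of 1, (of 1)⁻¹ * of 2, (of 3)⁻¹ * of 2, of 0 * of 3, of 0, of 1, of 2, of 3]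

theorem lift_tietzeImage_eq_one : ∀ r ∈ relsR3, FreeGroup.lift tietzeImage r = 1 := by
  simp only [relsR3, Set.mem_insert_iff, Set.mem_singleton_iff]
  rintro r (rfl | rfl | rfl | rfl) <;> simp [tietzeImage]

def presentedR3ToFree : PresentedGroup relsR3 →* FreeGroup (Fin 4) :=
  PresentedGroup.toGroup lift_tietzeImage_eq_one

def freeToPresentedR3 : FreeGroup (Fin 4) →* PresentedGroup relsR3 :=
  FreeGroup.lift fun i => PresentedGroup.of (Fin.natAdd 4 i)

theorem freeToPresentedR3_tietzeImage (i : Fin 8) :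
    freeToPresentedR3 (tietzeImage i) = PresentedGroup.of i := by
  fin_cases i <;> simp [tietzeImage, freeToPresentedR3] <;>
    first
    | exact PresentedGroup.of_mul_of_eq_of_mul_inv_mem (by simp [relsR3])
    | exact PresentedGroup.inv_of_mul_of_eq_of_mul_inv_mem (by simp [relsR3])

def presentedR3EquivFree : PresentedGroup relsR3 ≃* FreeGroup (Fin 4) :=
  MonoidHom.toMulEquiv presentedR3ToFree freeToPresentedR3
    (PresentedGroup.ext fun i => by
      simp [presentedR3ToFree, freeToPresentedR3_tietzeImage])
    (FreeGroup.ext_hom _ _ fun i => by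
      fin_cases i <;> rfl)

/-- The group `⟨a,b,c,d,u,v,w,x ∣ R₃⟩` is isomorphic to the free
group `F(u,v,w,x)`, and in `F(u,v,w,x)` the set
`S = {uv, v⁻¹w, x⁻¹w, ux, u, v, w, x}` satisfies: for all `α,β,γ ∈ S`,
`αβγ ≠ e` and `αβγ ∉ S`. -/
theorem presentation_R3_free_and_no_triple_products :
    Nonempty (PresentedGroup relsR3 ≃* FreeGroup (Fin 4)) ∧
    (∀ α ∈ setS9, ∀ β ∈ setS9, ∀ γ ∈ setS9,
      α * β * γ ≠ 1 ∧ α * β * γ ∉ setS9) := by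
  refine ⟨⟨presentedR3EquivFree⟩, fun α hα β hβ γ hγ => ?_⟩
  have h := mul_mul_notMem_of_map_lt_pow_three weightedDegree
    (fun _ => two_le_weightedDegree_of_mem_setS9)
    (fun _ => weightedDegree_lt_six_of_mem_insert_one_setS9) hα hβ hγ
  exact not_or.mp h
end

section
/- In the group F₂ × F₂ with presentation ⟨a,b,c,d,Δ₁,Δ₂,Δ₃,Δ₄ ∣ Δ₁=ab=ba, Δ₂=bc=cb, Δ₃=cd=dc, Δ₄=da=ad⟩ (where a,c generate one free factor and b,d the other), with generating set S = {a,b,c,d,Δ₁,Δ₂,Δ₃,Δ₄}, condition (5) of the systolicity criterion fails: there exist u,v,w,x ∈ S with v ≠ x, u ≠ w, wv ∈ S, wx ∈ S, uv ∈ S, ux ∈ S, but for no k ∈ S does w = ku or x = vk hold. Concretely (u,v,w,x) = (a,b,c,d) is such a tuple. -/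
namespace Stmt10

/-- `a = (a, e)` in `F(a,c) × F(b,d)`. -/
def a : FreeGroup (Fin 2) × FreeGroup (Fin 2) := (FreeGroup.of 0, 1)
/-- `c = (c, e)`. -/
def c : FreeGroup (Fin 2) × FreeGroup (Fin 2) := (FreeGroup.of 1, 1)
/-- `b = (e, b)`. -/
def b : FreeGroup (Fin 2) × FreeGroup (Fin 2) := (1, FreeGroup.of 0)
/-- `d = (e, d)`. -/
def d : FreeGroup (Fin 2) × FreeGroup (Fin 2) := (1, FreeGroup.of 1)

/-- The generating set `S = {a,b,c,d,Δ₁,Δ₂,Δ₃,Δ₄}` with `Δ₁ = ab`, `Δ₂ = bc`,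
`Δ₃ = cd`, `Δ₄ = da` in `F₂ × F₂`. -/
def S : Set (FreeGroup (Fin 2) × FreeGroup (Fin 2)) :=
  {a, b, c, d, a * b, b * c, c * d, d * a}

/-- In `F₂ × F₂` with the generating set
`S = {a,b,c,d,Δ₁,Δ₂,Δ₃,Δ₄}`, condition (5) of the systolicity criterion fails:
the tuple `(u,v,w,x) = (a,b,c,d)` satisfies `v ≠ x`, `u ≠ w`, `wv, wx, uv, ux ∈ S`,
but no `k ∈ S` satisfies `w = ku` or `x = vk`. -/
theorem condition_five_fails :
    b ≠ d ∧ a ≠ c ∧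
    c * b ∈ S ∧ c * d ∈ S ∧ a * b ∈ S ∧ a * d ∈ S ∧
    (∀ k ∈ S, c ≠ k * a ∧ d ≠ b * k) := by
  refine ⟨by decide, by decide, ?_, ?_, ?_, ?_, ?_⟩
  · have : c * b = b * c := by decide
    rw [this]; simp [S]
  · simp [S]
  · simp [S]
  · have : a * d = d * a := by decide
    rw [this]; simp [S]
  · intro k hk
    simp only [S, Set.mem_insert_iff, Set.mem_singleton_iff] at hk
    rcases hk with rfl | rfl | rfl | rfl | rfl | rfl | rfl | rfl <;>
      exact ⟨by decide, by decide⟩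

end Stmt10
end

section
/- Let Γ be a finite labeled simple graph and A_Γ its Artin group with standard generators x_v. For an edge e = (v_i, v_j) with label m ≥ 3, define t_k = ([⋯x_j x_i x_j]_k)⁻¹ [⋯x_j x_i x_j]_{k+1} for 1 ≤ k ≤ m−2 (suffix-alternating words of the indicated lengths ending in x_j, resp. extended by one letter). Then in A_Γ: (i) x_i x_j = x_j t₁; (ii) t_k t_{k+1} = x_i x_j for 1 ≤ k ≤ m−3; (iii) t_{m−2} x_i = x_i x_j. Conversely, these relations together imply [x_i x_j x_i ⋯]_m = [x_j x_i x_j ⋯]_m. -/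
/-- The alternating word `[xyx⋯]_k` of length `k` starting with `x`. -/
def altStart {G : Type*} [Group G] (x y : G) (k : ℕ) : G :=
  ((List.range k).map (fun j => if j % 2 = 0 then x else y)).prod

/-- The alternating word `[⋯xyxy]_k` of length `k` ending with `y`. -/
def altEnd {G : Type*} [Group G] (x y : G) (k : ℕ) : G :=
  ((List.range k).map (fun j => if (k - j) % 2 = 1 then y else x)).prod

section aux
variable {G : Type*} [Group G] (x y : G)

lemma altEnd_one : altEnd x y 1 = y := by
  simp [altEnd, List.range_succ]

lemma altEnd_two : altEnd x y 2 = x * y := by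
  simp [altEnd, List.range_succ]

lemma altEnd_add_two (k : ℕ) : altEnd x y (k + 2) = altEnd x y k * (x * y) := by
  unfold altEnd
  rw [show k + 2 = (k + 1) + 1 from rfl, List.range_succ, List.range_succ,
    List.map_append, List.map_append, List.prod_append, List.prod_append]
  simp only [List.map_cons, List.map_nil, List.prod_cons, List.prod_nil]
  have hmap : (List.range k).map (fun j => if (k + 1 + 1 - j) % 2 = 1 then y else x)
      = (List.range k).map (fun j => if (k - j) % 2 = 1 then y else x) := by
    apply List.map_congr_left
    intro j hj
    rw [List.mem_range] at hj
    have : (k + 1 + 1 - j) % 2 = (k - j) % 2 := by omega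
    rw [this]
  rw [hmap]
  have e1 : (k + 1 + 1 - k) % 2 = 0 := by omega
  have e2 : (k + 1 + 1 - (k + 1)) % 2 = 1 := by omega
  rw [e1, e2]
  simp [mul_assoc]

lemma altEnd_two_mul (i : ℕ) : altEnd x y (2 * i) = (x * y) ^ i := by
  induction i with
  | zero => simp [altEnd]
  | succ n ih =>
    have : 2 * (n + 1) = 2 * n + 2 := by ring
    rw [this, altEnd_add_two, ih, pow_succ]

lemma altEnd_two_mul_add_one (i : ℕ) : altEnd x y (2 * i + 1) = y * (x * y) ^ i := by
  induction i with
  | zero => simp [altEnd_one]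
  | succ n ih =>
    have : 2 * (n + 1) + 1 = (2 * n + 1) + 2 := by ring
    rw [this, altEnd_add_two, ih, pow_succ, mul_assoc]

lemma altStart_add_two (k : ℕ) : altStart x y (k + 2) = (x * y) * altStart x y k := by
  unfold altStart
  rw [List.range_succ_eq_map, List.range_succ_eq_map]
  simp only [List.map_cons, List.prod_cons, List.map_map]
  have hmap : (List.range k).map ((fun j => if j % 2 = 0 then x else y) ∘ Nat.succ ∘ Nat.succ)
      = (List.range k).map (fun j => if j % 2 = 0 then x else y) := by
    apply List.map_congr_left
    intro j _
    simp [Function.comp, Nat.succ_eq_add_one, show (j + 1 + 1) % 2 = j % 2 from by omega]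
  rw [hmap]
  norm_num [mul_assoc]

lemma altStart_two_mul (i : ℕ) : altStart x y (2 * i) = (x * y) ^ i := by
  induction i with
  | zero => simp [altStart]
  | succ n ih =>
    have : 2 * (n + 1) = 2 * n + 2 := by ring
    rw [this, altStart_add_two, ih, pow_succ']

lemma altStart_two_mul_add_one (i : ℕ) : altStart x y (2 * i + 1) = (x * y) ^ i * x := by
  induction i with
  | zero => simp [altStart, List.range_succ]
  | succ n ih =>
    have : 2 * (n + 1) + 1 = (2 * n + 1) + 2 := by ring
    rw [this, altStart_add_two, ih, pow_succ']; simp [mul_assoc]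

lemma sc (n : ℕ) : y * (x * y) ^ n = (y * x) ^ n * y := by
  have h : SemiconjBy y (x * y) (y * x) := by
    unfold SemiconjBy
    group
  exact h.pow_right n

lemma braid_iff (m : ℕ) (hm : 3 ≤ m) :
    ((altEnd x y (m - 2))⁻¹ * altEnd x y (m - 1)) * x = x * y ↔
      altStart x y m = altStart y x m := by
  rcases Nat.even_or_odd m with ⟨i, hi⟩ | ⟨i, hi⟩
  · obtain ⟨j, hj⟩ : ∃ j, i = j + 2 := ⟨i - 2, by omega⟩
    have h1 : m - 2 = 2 * (j + 1) := by omega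
    have h2 : m - 1 = 2 * (j + 1) + 1 := by omega
    have h3 : m = 2 * (j + 2) := by omega
    rw [h1, h2, h3, altEnd_two_mul, altEnd_two_mul_add_one, altStart_two_mul,
      altStart_two_mul]
    have F1 : (x * y) ^ (j + 2) = (x * y) ^ (j + 1) * (x * y) := pow_succ _ _
    have F2 : (y * x) ^ (j + 2) = y * (x * y) ^ (j + 1) * x := by
      calc (y * x) ^ (j + 2) = (y * x) ^ (j + 1) * y * x := by
            rw [pow_succ, mul_assoc]
        _ = y * (x * y) ^ (j + 1) * x := by rw [← sc]
    rw [mul_assoc, inv_mul_eq_iff_eq_mul, F1, F2]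
    constructor
    · intro h; rw [h]
    · intro h; rw [h]
  · obtain ⟨j, hj⟩ : ∃ j, i = j + 1 := ⟨i - 1, by omega⟩
    have h1 : m - 2 = 2 * j + 1 := by omega
    have h2 : m - 1 = 2 * (j + 1) := by omega
    have h3 : m = 2 * (j + 1) + 1 := by omega
    rw [h1, h2, h3, altEnd_two_mul, altEnd_two_mul_add_one, altStart_two_mul_add_one,
      altStart_two_mul_add_one]
    have F2 : (y * x) ^ (j + 1) * y = (y * (x * y) ^ j) * (x * y) := by
      rw [← sc, pow_succ, mul_assoc]
    rw [mul_assoc, inv_mul_eq_iff_eq_mul, F2]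

end aux

/-- In a group with elements `x, y` satisfying the braid relation
`[xyx⋯]_m = [yxy⋯]_m` (`m ≥ 3`), the elements
`t_k = ([⋯yxy]_k)⁻¹[⋯yxy]_{k+1}` satisfy (i) `xy = y t₁`, (ii)
`t_k t_{k+1} = xy` for `1 ≤ k ≤ m−3`, (iii) `t_{m−2} x = xy`; conversely, any
elements `t₁,…,t_{m−2}` satisfying (i)–(iii) force the braid relation. -/
theorem dual_relations_iff_braid {G : Type*} [Group G] (x y : G) (m : ℕ)
    (hm : 3 ≤ m) :
    (altStart x y m = altStart y x m →
      (x * y = y * ((altEnd x y 1)⁻¹ * altEnd x y 2) ∧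
       (∀ k, 1 ≤ k → k ≤ m - 3 →
         ((altEnd x y k)⁻¹ * altEnd x y (k + 1)) *
           ((altEnd x y (k + 1))⁻¹ * altEnd x y (k + 2)) = x * y) ∧
       ((altEnd x y (m - 2))⁻¹ * altEnd x y (m - 1)) * x = x * y)) ∧
    (∀ t : ℕ → G,
      x * y = y * t 1 →
      (∀ k, 1 ≤ k → k ≤ m - 3 → t k * t (k + 1) = x * y) →
      t (m - 2) * x = x * y →
      altStart x y m = altStart y x m) := by
  constructor
  · intro hb
    refine ⟨?_, ?_, ?_⟩
    · rw [altEnd_one, altEnd_two]; group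
    · intro k _ _
      rw [altEnd_add_two]; group
    · exact (braid_iff x y m hm).mpr hb
  · intro t h1 h2 h3
    have key : ∀ k, 1 ≤ k → k ≤ m - 2 → t k = (altEnd x y k)⁻¹ * altEnd x y (k + 1) := by
      intro k
      induction k with
      | zero => omega
      | succ n ih =>
        intro _ hk
        rcases Nat.eq_zero_or_pos n with hn | hn
        · subst hn
          rw [altEnd_one, altEnd_two]
          have : y * t 1 = y * (y⁻¹ * (x * y)) := by rw [← h1]; group
          exact mul_left_cancel this
        · have hn3 : n ≤ m - 3 := by omega
          have htn := ih hn (by omega)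
          have hrel := h2 n hn hn3
          rw [htn] at hrel
          have : t (n + 1) = (altEnd x y (n + 1))⁻¹ * altEnd x y (n + 2) := by
            rw [altEnd_add_two]
            calc t (n + 1) = ((altEnd x y n)⁻¹ * altEnd x y (n + 1))⁻¹ *
                (((altEnd x y n)⁻¹ * altEnd x y (n + 1)) * t (n + 1)) := by group
              _ = ((altEnd x y n)⁻¹ * altEnd x y (n + 1))⁻¹ * (x * y) := by rw [hrel]
              _ = (altEnd x y (n + 1))⁻¹ * (altEnd x y n * (x * y)) := by group
          rw [this]
    have hm2 : 1 ≤ m - 2 := by omega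
    have h4 := key (m - 2) hm2 le_rfl
    have h5 : m - 2 + 1 = m - 1 := by omega
    rw [h4, h5] at h3
    exact (braid_iff x y m hm).mp h3
end

section
/- Let G be a group with finite generating set S, S ∩ S⁻¹ = ∅, with a restricted triangular presentation (all relators of the form abc⁻¹ with a,b,c ∈ S, and abc ∈ S ⟹ ab ∈ S and bc ∈ S for a,b,c ∈ S). In the link L of the identity vertex in the flag complex of the Cayley graph, every embedded 5-cycle has a diagonal. Equivalently, as a statement about S: there is no 5-tuple of elements s₁,…,s₅ ∈ S ∪ S⁻¹ that are pairwise distinct, consecutively adjacent (sᵢ⁻¹s_{i+1} ∈ S ∪ S⁻¹ cyclically), and with no non-consecutive pair adjacent. -/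
namespace LinkFiveAux

variable {G : Type*} [Group G]

/-- A relation `abc = 1` with `a,b,c ∈ S` is impossible, so a mixed edge between a
positive vertex `a` and a negative vertex `b` (with `b⁻¹ ∈ S`) forces `b⁻¹ * a ∈ S`. -/
lemma mixedEdge (S : Finset G)
    (habc : ∀ a ∈ S, ∀ b ∈ S, ∀ c ∈ S, a * b * c ≠ 1)
    {a b : G} (ha : a ∈ S) (hb : b⁻¹ ∈ S)
    (h : a⁻¹ * b ∈ S ∨ b⁻¹ * a ∈ S) : b⁻¹ * a ∈ S := by
  rcases h with h | h
  · exact absurd (show b⁻¹ * a * (a⁻¹ * b) = 1 by group) (habc b⁻¹ hb a ha (a⁻¹ * b) h)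
  · exact h

/-- Positive chain: `a → b → c` forces the diagonal `a ∼ c`. -/
lemma chainP (S : Finset G)
    (hclos : ∀ a ∈ S, ∀ b ∈ S, ∀ c ∈ S, a * b * c ∈ S → a * b ∈ S ∧ b * c ∈ S)
    {a b c : G} (ha : a ∈ S) (hc : c ∈ S)
    (h1 : a⁻¹ * b ∈ S) (h2 : b⁻¹ * c ∈ S) : a⁻¹ * c ∈ S := by
  have hp : a * (a⁻¹ * b) * (b⁻¹ * c) ∈ S := by
    rw [show a * (a⁻¹ * b) * (b⁻¹ * c) = c by group]; exact hc
  have := (hclos a ha (a⁻¹ * b) h1 (b⁻¹ * c) h2 hp).2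
  rwa [show (a⁻¹ * b) * (b⁻¹ * c) = a⁻¹ * c by group] at this

/-- Negative chain: same-oriented chain of negative vertices forces a diagonal. -/
lemma chainN (S : Finset G)
    (hclos : ∀ a ∈ S, ∀ b ∈ S, ∀ c ∈ S, a * b * c ∈ S → a * b ∈ S ∧ b * c ∈ S)
    {x y z : G} (hx : x⁻¹ ∈ S) (hz : z⁻¹ ∈ S)
    (h1 : y⁻¹ * x ∈ S) (h2 : z⁻¹ * y ∈ S) : z⁻¹ * x ∈ S := by
  have hp : (z⁻¹ * y) * (y⁻¹ * x) * x⁻¹ ∈ S := by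
    rw [show (z⁻¹ * y) * (y⁻¹ * x) * x⁻¹ = z⁻¹ by group]; exact hz
  have := (hclos (z⁻¹ * y) h2 (y⁻¹ * x) h1 x⁻¹ hx hp).1
  rwa [show (z⁻¹ * y) * (y⁻¹ * x) = z⁻¹ * x by group] at this

/-- Head of a positive arrow adjacent to a negative vertex forces a diagonal. -/
lemma headP (S : Finset G)
    (hclos : ∀ a ∈ S, ∀ b ∈ S, ∀ c ∈ S, a * b * c ∈ S → a * b ∈ S ∧ b * c ∈ S)
    {x y z : G} (hz : z⁻¹ ∈ S) (hx : x ∈ S)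
    (h1 : x⁻¹ * y ∈ S) (h2 : z⁻¹ * y ∈ S) : z⁻¹ * x ∈ S := by
  have hp : z⁻¹ * x * (x⁻¹ * y) ∈ S := by
    rw [show z⁻¹ * x * (x⁻¹ * y) = z⁻¹ * y by group]; exact h2
  exact (hclos z⁻¹ hz x hx (x⁻¹ * y) h1 hp).1

/-- Head of a negative arrow adjacent to a positive vertex forces a diagonal. -/
lemma headN (S : Finset G)
    (hclos : ∀ a ∈ S, ∀ b ∈ S, ∀ c ∈ S, a * b * c ∈ S → a * b ∈ S ∧ b * c ∈ S)
    {x y z : G} (h1 : y⁻¹ * x ∈ S) (hx : x⁻¹ ∈ S) (hz : z ∈ S)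
    (h2 : y⁻¹ * z ∈ S) : x⁻¹ * z ∈ S := by
  have hp : (y⁻¹ * x) * x⁻¹ * z ∈ S := by
    rw [show (y⁻¹ * x) * x⁻¹ * z = y⁻¹ * z by group]; exact h2
  exact (hclos (y⁻¹ * x) h1 x⁻¹ hx z hz hp).2

/-- Case: all five vertices positive. -/
lemma allPos (S : Finset G)
    (hclos : ∀ a ∈ S, ∀ b ∈ S, ∀ c ∈ S, a * b * c ∈ S → a * b ∈ S ∧ b * c ∈ S)
    (x0 x1 x2 x3 x4 : G)
    (p0 : x0 ∈ S) (p1 : x1 ∈ S) (p2 : x2 ∈ S) (p3 : x3 ∈ S) (p4 : x4 ∈ S)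
    (a01 : x0⁻¹ * x1 ∈ S ∨ x1⁻¹ * x0 ∈ S)
    (a12 : x1⁻¹ * x2 ∈ S ∨ x2⁻¹ * x1 ∈ S)
    (a23 : x2⁻¹ * x3 ∈ S ∨ x3⁻¹ * x2 ∈ S)
    (a34 : x3⁻¹ * x4 ∈ S ∨ x4⁻¹ * x3 ∈ S)
    (a40 : x4⁻¹ * x0 ∈ S ∨ x0⁻¹ * x4 ∈ S)
    (nd02 : x0⁻¹ * x2 ∉ S) (nd02' : x2⁻¹ * x0 ∉ S)
    (nd13 : x1⁻¹ * x3 ∉ S) (nd13' : x3⁻¹ * x1 ∉ S)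
    (nd24 : x2⁻¹ * x4 ∉ S) (nd24' : x4⁻¹ * x2 ∉ S)
    (nd30 : x3⁻¹ * x0 ∉ S) (nd30' : x0⁻¹ * x3 ∉ S)
    (nd41 : x4⁻¹ * x1 ∉ S) (nd41' : x1⁻¹ * x4 ∉ S) : False := by
  rcases a01 with h01 | h10
  · rcases a12 with h12 | h21
    · exact nd02 (chainP S hclos p0 p2 h01 h12)
    · rcases a23 with h23 | h32
      · rcases a34 with h34 | h43
        · exact nd24 (chainP S hclos p2 p4 h23 h34)
        · rcases a40 with h40 | h04
          · exact nd41 (chainP S hclos p4 p1 h40 h01)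
          · exact nd30' (chainP S hclos p0 p3 h04 h43)
      · exact nd13' (chainP S hclos p3 p1 h32 h21)
  · rcases a40 with h40 | h04
    · rcases a34 with h34 | h43
      · exact nd30 (chainP S hclos p3 p0 h34 h40)
      · rcases a23 with h23 | h32
        · rcases a12 with h12 | h21
          · exact nd13 (chainP S hclos p1 p3 h12 h23)
          · exact nd02' (chainP S hclos p2 p0 h21 h10)
        · exact nd24' (chainP S hclos p4 p2 h43 h32)
    · exact nd41' (chainP S hclos p1 p4 h10 h04)

/-- Case: all five vertices negative. -/
lemma allNeg (S : Finset G)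
    (hclos : ∀ a ∈ S, ∀ b ∈ S, ∀ c ∈ S, a * b * c ∈ S → a * b ∈ S ∧ b * c ∈ S)
    (x0 x1 x2 x3 x4 : G)
    (n0 : x0⁻¹ ∈ S) (n1 : x1⁻¹ ∈ S) (n2 : x2⁻¹ ∈ S) (n3 : x3⁻¹ ∈ S) (n4 : x4⁻¹ ∈ S)
    (a01 : x0⁻¹ * x1 ∈ S ∨ x1⁻¹ * x0 ∈ S)
    (a12 : x1⁻¹ * x2 ∈ S ∨ x2⁻¹ * x1 ∈ S)
    (a23 : x2⁻¹ * x3 ∈ S ∨ x3⁻¹ * x2 ∈ S)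
    (a34 : x3⁻¹ * x4 ∈ S ∨ x4⁻¹ * x3 ∈ S)
    (a40 : x4⁻¹ * x0 ∈ S ∨ x0⁻¹ * x4 ∈ S)
    (nd02 : x0⁻¹ * x2 ∉ S) (nd02' : x2⁻¹ * x0 ∉ S)
    (nd13 : x1⁻¹ * x3 ∉ S) (nd13' : x3⁻¹ * x1 ∉ S)
    (nd24 : x2⁻¹ * x4 ∉ S) (nd24' : x4⁻¹ * x2 ∉ S)
    (nd30 : x3⁻¹ * x0 ∉ S) (nd30' : x0⁻¹ * x3 ∉ S)
    (nd41 : x4⁻¹ * x1 ∉ S) (nd41' : x1⁻¹ * x4 ∉ S) : False := by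
  rcases a01 with h01 | h10
  · rcases a40 with h40 | h04
    · exact nd41 (chainN S hclos n1 n4 h01 h40)
    · rcases a34 with h34 | h43
      · rcases a23 with h23 | h32
        · exact nd24 (chainN S hclos n4 n2 h34 h23)
        · rcases a12 with h12 | h21
          · exact nd02 (chainN S hclos n2 n0 h12 h01)
          · exact nd13' (chainN S hclos n1 n3 h21 h32)
      · exact nd30' (chainN S hclos n3 n0 h43 h04)
  · rcases a12 with h12 | h21
    · rcases a23 with h23 | h32
      · exact nd13 (chainN S hclos n3 n1 h23 h12)
      · rcases a34 with h34 | h43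
        · rcases a40 with h40 | h04
          · exact nd30 (chainN S hclos n0 n3 h40 h34)
          · exact nd41' (chainN S hclos n4 n1 h04 h10)
        · exact nd24' (chainN S hclos n2 n4 h32 h43)
    · exact nd02' (chainN S hclos n0 n2 h10 h21)

/-- Case: `x0` positive, `x1` negative (covers all remaining sign patterns). -/
lemma mixedPN (S : Finset G)
    (hclos : ∀ a ∈ S, ∀ b ∈ S, ∀ c ∈ S, a * b * c ∈ S → a * b ∈ S ∧ b * c ∈ S)
    (habc : ∀ a ∈ S, ∀ b ∈ S, ∀ c ∈ S, a * b * c ≠ 1)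
    (x0 x1 x2 x3 x4 : G)
    (p0 : x0 ∈ S) (n1 : x1⁻¹ ∈ S)
    (m2 : x2 ∈ S ∨ x2⁻¹ ∈ S) (m3 : x3 ∈ S ∨ x3⁻¹ ∈ S) (m4 : x4 ∈ S ∨ x4⁻¹ ∈ S)
    (a01 : x0⁻¹ * x1 ∈ S ∨ x1⁻¹ * x0 ∈ S)
    (a12 : x1⁻¹ * x2 ∈ S ∨ x2⁻¹ * x1 ∈ S)
    (a23 : x2⁻¹ * x3 ∈ S ∨ x3⁻¹ * x2 ∈ S)
    (a34 : x3⁻¹ * x4 ∈ S ∨ x4⁻¹ * x3 ∈ S)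
    (a40 : x4⁻¹ * x0 ∈ S ∨ x0⁻¹ * x4 ∈ S)
    (nd02 : x0⁻¹ * x2 ∉ S) (nd02' : x2⁻¹ * x0 ∉ S)
    (nd13 : x1⁻¹ * x3 ∉ S) (nd13' : x3⁻¹ * x1 ∉ S)
    (nd24 : x2⁻¹ * x4 ∉ S) (nd24' : x4⁻¹ * x2 ∉ S)
    (nd30 : x3⁻¹ * x0 ∉ S) (nd30' : x0⁻¹ * x3 ∉ S)
    (nd41 : x4⁻¹ * x1 ∉ S) (nd41' : x1⁻¹ * x4 ∉ S) : False := by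
  have e01 : x1⁻¹ * x0 ∈ S := mixedEdge S habc p0 n1 a01
  rcases m2 with p2 | n2
  · -- x2 positive: the edge x1–x2 is mixed
    have e12 : x1⁻¹ * x2 ∈ S := mixedEdge S habc p2 n1 a12.symm
    rcases m3 with p3 | n3
    · rcases m4 with p4 | n4
      · -- pattern P N P P P
        have h23 : x2⁻¹ * x3 ∈ S := by
          rcases a23 with h | h
          · exact h
          · exact absurd (headP S hclos n1 p3 h e12) nd13
        have h04 : x0⁻¹ * x4 ∈ S := by
          rcases a40 with h | h
          · exact absurd (headP S hclos n1 p4 h e01) nd41'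
          · exact h
        rcases a34 with h34 | h43
        · exact nd24 (chainP S hclos p2 p4 h23 h34)
        · exact nd30' (chainP S hclos p0 p3 h04 h43)
      · -- pattern P N P P N
        have e34 : x4⁻¹ * x3 ∈ S := mixedEdge S habc p3 n4 a34
        rcases a23 with h23 | h32
        · exact nd24' (headP S hclos n4 p2 h23 e34)
        · exact nd13 (headP S hclos n1 p3 h32 e12)
    · rcases m4 with p4 | n4
      · -- pattern P N P N P
        have e34 : x3⁻¹ * x4 ∈ S := mixedEdge S habc p4 n3 a34.symm
        rcases a40 with h40 | h04
        · exact nd41' (headP S hclos n1 p4 h40 e01)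
        · exact nd30 (headP S hclos n3 p0 h04 e34)
      · -- pattern P N P N N
        have e23 : x3⁻¹ * x2 ∈ S := mixedEdge S habc p2 n3 a23
        have e40 : x4⁻¹ * x0 ∈ S := mixedEdge S habc p0 n4 a40.symm
        rcases a34 with h34 | h43
        · exact nd24' (headN S hclos h34 n4 p2 e23)
        · exact nd30 (headN S hclos h43 n3 p0 e40)
  · -- x2 negative
    rcases m3 with p3 | n3
    · -- patterns P N N P ?
      have e23 : x2⁻¹ * x3 ∈ S := mixedEdge S habc p3 n2 a23.symm
      rcases a12 with h12 | h21
      · exact nd02' (headN S hclos h12 n2 p0 e01)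
      · exact nd13 (headN S hclos h21 n1 p3 e23)
    · rcases m4 with p4 | n4
      · -- pattern P N N N P
        have e34 : x3⁻¹ * x4 ∈ S := mixedEdge S habc p4 n3 a34.symm
        rcases a40 with h40 | h04
        · exact nd41' (headP S hclos n1 p4 h40 e01)
        · exact nd30 (headP S hclos n3 p0 h04 e34)
      · -- pattern P N N N N
        have e40 : x4⁻¹ * x0 ∈ S := mixedEdge S habc p0 n4 a40.symm
        have h21 : x2⁻¹ * x1 ∈ S := by
          rcases a12 with h | h
          · exact absurd (headN S hclos h n2 p0 e01) nd02'
          · exact h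
        have h34 : x3⁻¹ * x4 ∈ S := by
          rcases a34 with h | h
          · exact h
          · exact absurd (headN S hclos h n3 p0 e40) nd30
        rcases a23 with h23 | h32
        · exact nd24 (chainN S hclos n4 n2 h34 h23)
        · exact nd13' (chainN S hclos n1 n3 h21 h32)

/-- Master case analysis on the signs of the five vertices. -/
lemma core (S : Finset G)
    (hclos : ∀ a ∈ S, ∀ b ∈ S, ∀ c ∈ S, a * b * c ∈ S → a * b ∈ S ∧ b * c ∈ S)
    (habc : ∀ a ∈ S, ∀ b ∈ S, ∀ c ∈ S, a * b * c ≠ 1)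
    (x0 x1 x2 x3 x4 : G)
    (m0 : x0 ∈ S ∨ x0⁻¹ ∈ S) (m1 : x1 ∈ S ∨ x1⁻¹ ∈ S) (m2 : x2 ∈ S ∨ x2⁻¹ ∈ S)
    (m3 : x3 ∈ S ∨ x3⁻¹ ∈ S) (m4 : x4 ∈ S ∨ x4⁻¹ ∈ S)
    (a01 : x0⁻¹ * x1 ∈ S ∨ x1⁻¹ * x0 ∈ S)
    (a12 : x1⁻¹ * x2 ∈ S ∨ x2⁻¹ * x1 ∈ S)
    (a23 : x2⁻¹ * x3 ∈ S ∨ x3⁻¹ * x2 ∈ S)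
    (a34 : x3⁻¹ * x4 ∈ S ∨ x4⁻¹ * x3 ∈ S)
    (a40 : x4⁻¹ * x0 ∈ S ∨ x0⁻¹ * x4 ∈ S)
    (nd02 : x0⁻¹ * x2 ∉ S) (nd02' : x2⁻¹ * x0 ∉ S)
    (nd13 : x1⁻¹ * x3 ∉ S) (nd13' : x3⁻¹ * x1 ∉ S)
    (nd24 : x2⁻¹ * x4 ∉ S) (nd24' : x4⁻¹ * x2 ∉ S)
    (nd30 : x3⁻¹ * x0 ∉ S) (nd30' : x0⁻¹ * x3 ∉ S)
    (nd41 : x4⁻¹ * x1 ∉ S) (nd41' : x1⁻¹ * x4 ∉ S) : False := by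
  rcases m0 with h0 | h0
  ·
    rcases m1 with h1 | h1
    ·
      rcases m2 with h2 | h2
      ·
        rcases m3 with h3 | h3
        ·
          rcases m4 with h4 | h4
          ·
            exact allPos S hclos x0 x1 x2 x3 x4 h0 h1 h2 h3 h4 a01 a12 a23 a34 a40 nd02 nd02' nd13 nd13' nd24 nd24' nd30 nd30' nd41 nd41'
          ·
            exact mixedPN S hclos habc x3 x4 x0 x1 x2 h3 h4 (Or.inl h0) (Or.inl h1) (Or.inl h2) a34 a40 a01 a12 a23 nd30 nd30' nd41 nd41' nd02 nd02' nd13 nd13' nd24 nd24'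
        ·
          rcases m4 with h4 | h4
          ·
            exact mixedPN S hclos habc x2 x3 x4 x0 x1 h2 h3 (Or.inl h4) (Or.inl h0) (Or.inl h1) a23 a34 a40 a01 a12 nd24 nd24' nd30 nd30' nd41 nd41' nd02 nd02' nd13 nd13'
          ·
            exact mixedPN S hclos habc x2 x3 x4 x0 x1 h2 h3 (Or.inr h4) (Or.inl h0) (Or.inl h1) a23 a34 a40 a01 a12 nd24 nd24' nd30 nd30' nd41 nd41' nd02 nd02' nd13 nd13'
      ·
        rcases m3 with h3 | h3
        ·
          rcases m4 with h4 | h4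
          ·
            exact mixedPN S hclos habc x1 x2 x3 x4 x0 h1 h2 (Or.inl h3) (Or.inl h4) (Or.inl h0) a12 a23 a34 a40 a01 nd13 nd13' nd24 nd24' nd30 nd30' nd41 nd41' nd02 nd02'
          ·
            exact mixedPN S hclos habc x1 x2 x3 x4 x0 h1 h2 (Or.inl h3) (Or.inr h4) (Or.inl h0) a12 a23 a34 a40 a01 nd13 nd13' nd24 nd24' nd30 nd30' nd41 nd41' nd02 nd02'
        ·
          rcases m4 with h4 | h4
          ·
            exact mixedPN S hclos habc x1 x2 x3 x4 x0 h1 h2 (Or.inr h3) (Or.inl h4) (Or.inl h0) a12 a23 a34 a40 a01 nd13 nd13' nd24 nd24' nd30 nd30' nd41 nd41' nd02 nd02'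
          ·
            exact mixedPN S hclos habc x1 x2 x3 x4 x0 h1 h2 (Or.inr h3) (Or.inr h4) (Or.inl h0) a12 a23 a34 a40 a01 nd13 nd13' nd24 nd24' nd30 nd30' nd41 nd41' nd02 nd02'
    ·
      rcases m2 with h2 | h2
      ·
        rcases m3 with h3 | h3
        ·
          rcases m4 with h4 | h4
          ·
            exact mixedPN S hclos habc x0 x1 x2 x3 x4 h0 h1 (Or.inl h2) (Or.inl h3) (Or.inl h4) a01 a12 a23 a34 a40 nd02 nd02' nd13 nd13' nd24 nd24' nd30 nd30' nd41 nd41'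
          ·
            exact mixedPN S hclos habc x0 x1 x2 x3 x4 h0 h1 (Or.inl h2) (Or.inl h3) (Or.inr h4) a01 a12 a23 a34 a40 nd02 nd02' nd13 nd13' nd24 nd24' nd30 nd30' nd41 nd41'
        ·
          rcases m4 with h4 | h4
          ·
            exact mixedPN S hclos habc x0 x1 x2 x3 x4 h0 h1 (Or.inl h2) (Or.inr h3) (Or.inl h4) a01 a12 a23 a34 a40 nd02 nd02' nd13 nd13' nd24 nd24' nd30 nd30' nd41 nd41'
          ·
            exact mixedPN S hclos habc x0 x1 x2 x3 x4 h0 h1 (Or.inl h2) (Or.inr h3) (Or.inr h4) a01 a12 a23 a34 a40 nd02 nd02' nd13 nd13' nd24 nd24' nd30 nd30' nd41 nd41'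
      ·
        rcases m3 with h3 | h3
        ·
          rcases m4 with h4 | h4
          ·
            exact mixedPN S hclos habc x0 x1 x2 x3 x4 h0 h1 (Or.inr h2) (Or.inl h3) (Or.inl h4) a01 a12 a23 a34 a40 nd02 nd02' nd13 nd13' nd24 nd24' nd30 nd30' nd41 nd41'
          ·
            exact mixedPN S hclos habc x0 x1 x2 x3 x4 h0 h1 (Or.inr h2) (Or.inl h3) (Or.inr h4) a01 a12 a23 a34 a40 nd02 nd02' nd13 nd13' nd24 nd24' nd30 nd30' nd41 nd41'
        ·
          rcases m4 with h4 | h4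
          ·
            exact mixedPN S hclos habc x0 x1 x2 x3 x4 h0 h1 (Or.inr h2) (Or.inr h3) (Or.inl h4) a01 a12 a23 a34 a40 nd02 nd02' nd13 nd13' nd24 nd24' nd30 nd30' nd41 nd41'
          ·
            exact mixedPN S hclos habc x0 x1 x2 x3 x4 h0 h1 (Or.inr h2) (Or.inr h3) (Or.inr h4) a01 a12 a23 a34 a40 nd02 nd02' nd13 nd13' nd24 nd24' nd30 nd30' nd41 nd41'
  ·
    rcases m1 with h1 | h1
    ·
      rcases m2 with h2 | h2
      ·
        rcases m3 with h3 | h3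
        ·
          rcases m4 with h4 | h4
          ·
            exact mixedPN S hclos habc x4 x0 x1 x2 x3 h4 h0 (Or.inl h1) (Or.inl h2) (Or.inl h3) a40 a01 a12 a23 a34 nd41 nd41' nd02 nd02' nd13 nd13' nd24 nd24' nd30 nd30'
          ·
            exact mixedPN S hclos habc x3 x4 x0 x1 x2 h3 h4 (Or.inr h0) (Or.inl h1) (Or.inl h2) a34 a40 a01 a12 a23 nd30 nd30' nd41 nd41' nd02 nd02' nd13 nd13' nd24 nd24'
        ·
          rcases m4 with h4 | h4
          ·
            exact mixedPN S hclos habc x2 x3 x4 x0 x1 h2 h3 (Or.inl h4) (Or.inr h0) (Or.inl h1) a23 a34 a40 a01 a12 nd24 nd24' nd30 nd30' nd41 nd41' nd02 nd02' nd13 nd13'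
          ·
            exact mixedPN S hclos habc x2 x3 x4 x0 x1 h2 h3 (Or.inr h4) (Or.inr h0) (Or.inl h1) a23 a34 a40 a01 a12 nd24 nd24' nd30 nd30' nd41 nd41' nd02 nd02' nd13 nd13'
      ·
        rcases m3 with h3 | h3
        ·
          rcases m4 with h4 | h4
          ·
            exact mixedPN S hclos habc x1 x2 x3 x4 x0 h1 h2 (Or.inl h3) (Or.inl h4) (Or.inr h0) a12 a23 a34 a40 a01 nd13 nd13' nd24 nd24' nd30 nd30' nd41 nd41' nd02 nd02'
          ·
            exact mixedPN S hclos habc x1 x2 x3 x4 x0 h1 h2 (Or.inl h3) (Or.inr h4) (Or.inr h0) a12 a23 a34 a40 a01 nd13 nd13' nd24 nd24' nd30 nd30' nd41 nd41' nd02 nd02'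
        ·
          rcases m4 with h4 | h4
          ·
            exact mixedPN S hclos habc x1 x2 x3 x4 x0 h1 h2 (Or.inr h3) (Or.inl h4) (Or.inr h0) a12 a23 a34 a40 a01 nd13 nd13' nd24 nd24' nd30 nd30' nd41 nd41' nd02 nd02'
          ·
            exact mixedPN S hclos habc x1 x2 x3 x4 x0 h1 h2 (Or.inr h3) (Or.inr h4) (Or.inr h0) a12 a23 a34 a40 a01 nd13 nd13' nd24 nd24' nd30 nd30' nd41 nd41' nd02 nd02'
    ·
      rcases m2 with h2 | h2
      ·
        rcases m3 with h3 | h3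
        ·
          rcases m4 with h4 | h4
          ·
            exact mixedPN S hclos habc x4 x0 x1 x2 x3 h4 h0 (Or.inr h1) (Or.inl h2) (Or.inl h3) a40 a01 a12 a23 a34 nd41 nd41' nd02 nd02' nd13 nd13' nd24 nd24' nd30 nd30'
          ·
            exact mixedPN S hclos habc x3 x4 x0 x1 x2 h3 h4 (Or.inr h0) (Or.inr h1) (Or.inl h2) a34 a40 a01 a12 a23 nd30 nd30' nd41 nd41' nd02 nd02' nd13 nd13' nd24 nd24'
        ·
          rcases m4 with h4 | h4
          ·
            exact mixedPN S hclos habc x2 x3 x4 x0 x1 h2 h3 (Or.inl h4) (Or.inr h0) (Or.inr h1) a23 a34 a40 a01 a12 nd24 nd24' nd30 nd30' nd41 nd41' nd02 nd02' nd13 nd13'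
          ·
            exact mixedPN S hclos habc x2 x3 x4 x0 x1 h2 h3 (Or.inr h4) (Or.inr h0) (Or.inr h1) a23 a34 a40 a01 a12 nd24 nd24' nd30 nd30' nd41 nd41' nd02 nd02' nd13 nd13'
      ·
        rcases m3 with h3 | h3
        ·
          rcases m4 with h4 | h4
          ·
            exact mixedPN S hclos habc x4 x0 x1 x2 x3 h4 h0 (Or.inr h1) (Or.inr h2) (Or.inl h3) a40 a01 a12 a23 a34 nd41 nd41' nd02 nd02' nd13 nd13' nd24 nd24' nd30 nd30'
          ·
            exact mixedPN S hclos habc x3 x4 x0 x1 x2 h3 h4 (Or.inr h0) (Or.inr h1) (Or.inr h2) a34 a40 a01 a12 a23 nd30 nd30' nd41 nd41' nd02 nd02' nd13 nd13' nd24 nd24'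
        ·
          rcases m4 with h4 | h4
          ·
            exact mixedPN S hclos habc x4 x0 x1 x2 x3 h4 h0 (Or.inr h1) (Or.inr h2) (Or.inr h3) a40 a01 a12 a23 a34 nd41 nd41' nd02 nd02' nd13 nd13' nd24 nd24' nd30 nd30'
          ·
            exact allNeg S hclos x0 x1 x2 x3 x4 h0 h1 h2 h3 h4 a01 a12 a23 a34 a40 nd02 nd02' nd13 nd13' nd24 nd24' nd30 nd30' nd41 nd41'

end LinkFiveAux

/-- Let `G` have a finite restricted triangular presentation with
respect to `S` (`S ∩ S⁻¹ = ∅`, no relation `abc = e` with `a,b,c ∈ S`, and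
`abc ∈ S ⟹ ab ∈ S ∧ bc ∈ S`).  In the link of the identity vertex of the flag
complex of the Cayley graph (vertices `S ∪ S⁻¹`, adjacency `s ∼ t ↔ s⁻¹t ∈ S ∪ S⁻¹`),
every embedded 5-cycle has a diagonal: there is no 5-tuple of pairwise distinct
elements of `S ∪ S⁻¹`, consecutively adjacent cyclically, with no non-consecutive
pair adjacent. -/
theorem link_five_cycles_have_diagonals {G : Type*} [Group G] (S : Finset G)
    (hdisj : (S : Set G) ∩ (S : Set G)⁻¹ = ∅)
    (hclos : ∀ a ∈ S, ∀ b ∈ S, ∀ c ∈ S, a * b * c ∈ S → a * b ∈ S ∧ b * c ∈ S)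
    (habc : ∀ a ∈ S, ∀ b ∈ S, ∀ c ∈ S, a * b * c ≠ 1) :
    ¬ ∃ s : Fin 5 → G,
      (∀ n : Fin 5, s n ∈ (S : Set G) ∪ (S : Set G)⁻¹) ∧
      Function.Injective s ∧
      (∀ n : Fin 5, (s n)⁻¹ * s (n + 1) ∈ (S : Set G) ∪ (S : Set G)⁻¹) ∧
      (∀ n j : Fin 5, j ≠ n → j ≠ n + 1 → j ≠ n - 1 →
        (s n)⁻¹ * s j ∉ (S : Set G) ∪ (S : Set G)⁻¹) := by
  rintro ⟨s, hmem, -, hadj, hdiag⟩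
  have mem : ∀ n : Fin 5, s n ∈ S ∨ (s n)⁻¹ ∈ S := by
    intro n
    simpa [Set.mem_union, Set.mem_inv, Finset.mem_coe] using hmem n
  have adj : ∀ n : Fin 5, (s n)⁻¹ * s (n + 1) ∈ S ∨ (s (n + 1))⁻¹ * s n ∈ S := by
    intro n
    simpa [Set.mem_union, Set.mem_inv, Finset.mem_coe, mul_inv_rev] using hadj n
  have nd : ∀ n j : Fin 5, j ≠ n → j ≠ n + 1 → j ≠ n - 1 →
      (s n)⁻¹ * s j ∉ S ∧ (s j)⁻¹ * s n ∉ S := by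
    intro n j h1 h2 h3
    have h := hdiag n j h1 h2 h3
    simp only [Set.mem_union, Finset.mem_coe, Set.mem_inv, mul_inv_rev, inv_inv,
      not_or] at h
    exact h
  have a01 : (s 0)⁻¹ * s 1 ∈ S ∨ (s 1)⁻¹ * s 0 ∈ S := by
    have := adj 0; rwa [show (0 : Fin 5) + 1 = 1 by decide] at this
  have a12 : (s 1)⁻¹ * s 2 ∈ S ∨ (s 2)⁻¹ * s 1 ∈ S := by
    have := adj 1; rwa [show (1 : Fin 5) + 1 = 2 by decide] at this
  have a23 : (s 2)⁻¹ * s 3 ∈ S ∨ (s 3)⁻¹ * s 2 ∈ S := by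
    have := adj 2; rwa [show (2 : Fin 5) + 1 = 3 by decide] at this
  have a34 : (s 3)⁻¹ * s 4 ∈ S ∨ (s 4)⁻¹ * s 3 ∈ S := by
    have := adj 3; rwa [show (3 : Fin 5) + 1 = 4 by decide] at this
  have a40 : (s 4)⁻¹ * s 0 ∈ S ∨ (s 0)⁻¹ * s 4 ∈ S := by
    have := adj 4; rwa [show (4 : Fin 5) + 1 = 0 by decide] at this
  have nd02 := nd 0 2 (by decide) (by decide) (by decide)
  have nd13 := nd 1 3 (by decide) (by decide) (by decide)
  have nd24 := nd 2 4 (by decide) (by decide) (by decide)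
  have nd30 := nd 3 0 (by decide) (by decide) (by decide)
  have nd41 := nd 4 1 (by decide) (by decide) (by decide)
  exact LinkFiveAux.core S hclos habc (s 0) (s 1) (s 2) (s 3) (s 4)
    (mem 0) (mem 1) (mem 2) (mem 3) (mem 4) a01 a12 a23 a34 a40
    nd02.1 nd02.2 nd13.1 nd13.2 nd24.1 nd24.2 nd30.1 nd30.2 nd41.1 nd41.2
end
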